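/- arXiv:1611.03387 — 15 statements merged into one kernel-verified Lean document; each statement's English description precedes it below -/
import Mathlib

section
/- A composition (a_1,...,a_k) of nonnegative integers arises from a placement of non-attacking rooks on the linear chained board B^-_{n,k} if and only if a_1 ≤ n and a_{i-1} + a_i ≤ n for all 2 ≤ i ≤ k. -/
/-- Non-attacking rook placement on the linear chained board `B⁻_{n,k}`:
rooks are triples (board, row, column). -/
def LinNonAtt (n k : ℕ) (R : Finset (Fin k × Fin n × Fin n)) : Prop :=
  (∀ r ∈ R, ∀ s ∈ R, r ≠ s → r.1 = s.1 → r.2.1 ≠ s.2.1 ∧ r.2.2 ≠ s.2.2) ∧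
  (∀ r ∈ R, ∀ s ∈ R, (r.1 : ℕ) + 1 = (s.1 : ℕ) → r.2.1 ≠ s.2.2)

/-- Non-attacking rook placement on the circular chained board `B°_{n,k}`. -/
def CircNonAtt (n k : ℕ) (R : Finset (Fin k × Fin n × Fin n)) : Prop :=
  (∀ r ∈ R, ∀ s ∈ R, r ≠ s → r.1 = s.1 → r.2.1 ≠ s.2.1 ∧ r.2.2 ≠ s.2.2) ∧
  (∀ r ∈ R, ∀ s ∈ R, ((r.1 : ℕ) + 1) % k = (s.1 : ℕ) → r.2.1 ≠ s.2.2)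

/-- Number of rooks of `R` on board `i`. -/
def bCount {n k : ℕ} (R : Finset (Fin k × Fin n × Fin n)) (i : Fin k) : ℕ :=
  (R.filter fun r => r.1 = i).card

/-- `a_{i-1}` with the convention `a_0 = 0` (linear case). -/
def prevL {k : ℕ} (a : Fin k → ℕ) (i : Fin k) : ℕ :=
  if i.val = 0 then 0
  else a ⟨i.val - 1, Nat.lt_of_le_of_lt (Nat.sub_le _ _) i.isLt⟩

/-- `a_{i-1}` with cyclic index convention (circular case). -/
def prevC {k : ℕ} (a : Fin k → ℕ) (i : Fin k) : ℕ :=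
  a ⟨(i.val + (k - 1)) % k, Nat.mod_lt _ i.pos⟩


lemma card_lt_aux (n m : ℕ) (h : m ≤ n) :
    (Finset.univ.filter (fun r : Fin n => r.val < m)).card = m := by
  have : (Finset.univ.filter (fun r : Fin n => r.val < m)) =
      (Finset.range m).attachFin (fun x hx => lt_of_lt_of_le (Finset.mem_range.mp hx) h) := by
    ext r
    simp [Finset.mem_attachFin]
  rw [this, Finset.card_attachFin, Finset.card_range]

lemma card_ge_aux (n m : ℕ) (h : m ≤ n) :
    (Finset.univ.filter (fun r : Fin n => n - m ≤ r.val)).card = m := by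
  have key := Finset.card_filter_add_card_filter_not
    (s := (Finset.univ : Finset (Fin n))) (p := fun r : Fin n => r.val < n - m)
  simp only [not_lt] at key
  have h1 : (Finset.univ.filter (fun r : Fin n => r.val < n - m)).card = n - m :=
    card_lt_aux n (n - m) (Nat.sub_le _ _)
  have h2 : (Finset.univ : Finset (Fin n)).card = n := by simp
  omega

/-- A composition arises from a non-attacking rook placement on the linear chained
board iff `a_1 ≤ n` and `a_{i-1} + a_i ≤ n` for `2 ≤ i ≤ k`. -/
theorem linear_composition_characterization (n k : ℕ) (a : Fin k → ℕ) :
    (∃ R : Finset (Fin k × Fin n × Fin n),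
        LinNonAtt n k R ∧ ∀ i, bCount R i = a i) ↔
      ∀ i : Fin k, prevL a i + a i ≤ n := by
  constructor
  · rintro ⟨R, ⟨h1, h2⟩, hc⟩ i
    -- columns of board i
    set T2 := (R.filter (fun r => r.1 = i)).image (fun r => r.2.2) with hT2
    have hT2card : T2.card = a i := by
      rw [hT2, Finset.card_image_of_injOn, ← hc i, bCount]
      intro r hr s hs hrs
      simp only [Finset.mem_coe, Finset.mem_filter] at hr hs
      by_contra hne
      exact (h1 r hr.1 s hs.1 hne (hr.2.trans hs.2.symm)).2 hrs
    by_cases h0 : i.val = 0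
    · have : T2.card ≤ n := le_trans (Finset.card_le_univ T2) (by simp)
      simp [prevL, h0]
      omega
    · set j : Fin k := ⟨i.val - 1, Nat.lt_of_le_of_lt (Nat.sub_le _ _) i.isLt⟩ with hj
      set T1 := (R.filter (fun r => r.1 = j)).image (fun r => r.2.1) with hT1
      have hT1card : T1.card = a j := by
        rw [hT1, Finset.card_image_of_injOn, ← hc j, bCount]
        intro r hr s hs hrs
        simp only [Finset.mem_coe, Finset.mem_filter] at hr hs
        by_contra hne
        exact (h1 r hr.1 s hs.1 hne (hr.2.trans hs.2.symm)).1 hrs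
      have hdisj : Disjoint T1 T2 := by
        rw [Finset.disjoint_left]
        rintro x hx1 hx2
        simp only [hT1, hT2, Finset.mem_image, Finset.mem_filter] at hx1 hx2
        obtain ⟨r, ⟨hr, hrj⟩, hrx⟩ := hx1
        obtain ⟨s, ⟨hs, hsi⟩, hsx⟩ := hx2
        have : (r.1 : ℕ) + 1 = (s.1 : ℕ) := by
          rw [hrj, hsi]; simp [hj]; omega
        exact h2 r hr s hs this (hrx.trans hsx.symm)
      have : (T1 ∪ T2).card ≤ n := le_trans (Finset.card_le_univ _) (by simp)
      rw [Finset.card_union_of_disjoint hdisj, hT1card, hT2card] at this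
      simpa [prevL, h0, hj] using this
  · intro h
    have han : ∀ i, a i ≤ n := fun i => le_trans (Nat.le_add_left _ _) (h i)
    refine ⟨Finset.univ.filter (fun p : Fin k × Fin n × Fin n =>
      p.2.1 = p.2.2 ∧ (if p.1.val % 2 = 0 then p.2.1.val < a p.1
        else n - a p.1 ≤ p.2.1.val)), ⟨?_, ?_⟩, ?_⟩
    · -- same board
      intro r hr s hs hne hb
      simp only [Finset.mem_filter, Finset.mem_univ, true_and] at hr hs
      constructor
      · intro hrow
        apply hne
        have : r.2.2 = s.2.2 := by rw [← hr.1, ← hs.1, hrow]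
        exact Prod.ext hb (Prod.ext hrow this)
      · intro hcol
        apply hne
        have : r.2.1 = s.2.1 := by rw [hr.1, hs.1, hcol]
        exact Prod.ext hb (Prod.ext this hcol)
    · -- consecutive boards
      intro r hr s hs hadj
      simp only [Finset.mem_filter, Finset.mem_univ, true_and] at hr hs
      have hsi0 : (s.1 : ℕ) ≠ 0 := by omega
      have hprev : prevL a s.1 = a r.1 := by
        rw [prevL, if_neg hsi0]
        congr 1
        apply Fin.ext
        simp; omega
      have hsum : a r.1 + a s.1 ≤ n := by
        have := h s.1; rw [hprev] at this; exact this
      intro heq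
      have hx : (r.2.1 : ℕ) = (s.2.2 : ℕ) := congrArg Fin.val heq
      have hy : (s.2.1 : ℕ) = (s.2.2 : ℕ) := congrArg Fin.val hs.1
      have hr2 := hr.2; have hs2 := hs.2
      rcases Nat.mod_two_eq_zero_or_one (r.1 : ℕ) with he | he
      · rw [if_pos he] at hr2
        have hso : (s.1 : ℕ) % 2 = 1 := by omega
        rw [if_neg (by omega)] at hs2
        omega
      · rw [if_neg (by omega)] at hr2
        have hso : (s.1 : ℕ) % 2 = 0 := by omega
        rw [if_pos hso] at hs2
        have := han r.1
        omega
    · -- counts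
      intro i
      rw [bCount, Finset.filter_filter]
      have hset : (Finset.univ.filter (fun p : Fin k × Fin n × Fin n =>
          (p.2.1 = p.2.2 ∧ (if p.1.val % 2 = 0 then p.2.1.val < a p.1
            else n - a p.1 ≤ p.2.1.val)) ∧ p.1 = i)) =
          (Finset.univ.filter (fun r : Fin n =>
            if i.val % 2 = 0 then r.val < a i else n - a i ≤ r.val)).image
            (fun r => (i, r, r)) := by
        ext p
        obtain ⟨b, x, y⟩ := p
        simp only [Finset.mem_filter, Finset.mem_univ, true_and, Finset.mem_image,
          Prod.mk.injEq]
        constructor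
        · rintro ⟨⟨rfl, hcond⟩, rfl⟩
          exact ⟨x, hcond, rfl, rfl, rfl⟩
        · rintro ⟨r, hr, rfl, rfl, rfl⟩
          exact ⟨⟨rfl, hr⟩, rfl⟩
      rw [hset, Finset.card_image_of_injective _
        (fun x y hxy => by simpa using congrArg (fun p => p.2.1) hxy)]
      by_cases hp : i.val % 2 = 0
      · simp only [if_pos hp]
        exact card_lt_aux n (a i) (han i)
      · simp only [if_neg hp]
        exact card_ge_aux n (a i) (han i)
end

section
/- A composition (a_1,...,a_k) of nonnegative integers arises from a placement of non-attacking rooks on the circular chained board B^∘_{n,k} if and only if a_{i-1} + a_i ≤ n for all 1 ≤ i ≤ k, where indices are taken cyclically (a_0 = a_k). -/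
/-- A composition arises from a non-attacking rook placement on the circular chained
board iff `a_{i-1} + a_i ≤ n` cyclically. -/
theorem circular_composition_characterization (n k : ℕ) (a : Fin k → ℕ) :
    (∃ R : Finset (Fin k × Fin n × Fin n),
        CircNonAtt n k R ∧ ∀ i, bCount R i = a i) ↔
      ∀ i : Fin k, prevC a i + a i ≤ n := by
  constructor
  · rintro ⟨R, ⟨h1, h2⟩, hc⟩ i
    have hk : 0 < k := i.pos
    set p : Fin k := ⟨(i.val + (k - 1)) % k, Nat.mod_lt _ hk⟩ with hp
    have hpi : ((p : ℕ) + 1) % k = i.val := by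
      show ((i.val + (k - 1)) % k + 1) % k = i.val
      rw [Nat.mod_add_mod, show i.val + (k - 1) + 1 = i.val + k from by omega,
        Nat.add_mod_right, Nat.mod_eq_of_lt i.isLt]
    have hA : ((R.filter fun r => r.1 = p).image fun r => r.2.1).card = a p := by
      rw [Finset.card_image_of_injOn, ← bCount, hc]
      intro r hr s hs hrs
      simp only [Finset.mem_coe, Finset.mem_filter] at hr hs
      by_contra hne
      exact (h1 r hr.1 s hs.1 hne (hr.2.trans hs.2.symm)).1 hrs
    have hB : ((R.filter fun r => r.1 = i).image fun r => r.2.2).card = a i := by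
      rw [Finset.card_image_of_injOn, ← bCount, hc]
      intro r hr s hs hrs
      simp only [Finset.mem_coe, Finset.mem_filter] at hr hs
      by_contra hne
      exact (h1 r hr.1 s hs.1 hne (hr.2.trans hs.2.symm)).2 hrs
    have hdisj : Disjoint ((R.filter fun r => r.1 = p).image fun r => r.2.1)
        ((R.filter fun r => r.1 = i).image fun r => r.2.2) := by
      rw [Finset.disjoint_left]
      rintro x hx hy
      simp only [Finset.mem_image, Finset.mem_filter] at hx hy
      obtain ⟨r, ⟨hrR, hrp⟩, hrx⟩ := hx
      obtain ⟨s, ⟨hsR, hsi⟩, hsx⟩ := hy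
      refine h2 r hrR s hsR ?_ (by rw [hrx, hsx])
      rw [hrp, hsi, hpi]
    have := Finset.card_union_of_disjoint hdisj
    have hle : (((R.filter fun r => r.1 = p).image fun r => r.2.1) ∪
        ((R.filter fun r => r.1 = i).image fun r => r.2.2)).card ≤ n := by
      exact (Finset.card_le_univ _).trans (by simp)
    rw [this, hA, hB] at hle
    exact hle
  · intro h
    rcases Nat.eq_zero_or_pos k with hk | hk
    · subst hk
      exact ⟨∅, ⟨fun r hr => by simp at hr, fun r hr => by simp at hr⟩,
        fun i => i.elim0⟩
    have hone : ∀ i : Fin k, a i + a ⟨(i.val + 1) % k, Nat.mod_lt _ hk⟩ ≤ n := by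
      intro i
      have hp := h ⟨(i.val + 1) % k, Nat.mod_lt _ hk⟩
      have hidx : (((i.val + 1) % k + (k - 1)) % k) = i.val := by
        rw [Nat.mod_add_mod, show i.val + 1 + (k - 1) = i.val + k from by omega,
          Nat.add_mod_right, Nat.mod_eq_of_lt i.isLt]
      have heq : a i = a ⟨((i.val + 1) % k + (k - 1)) % k, Nat.mod_lt _ hk⟩ :=
        congrArg a (Fin.ext hidx.symm)
      rw [heq]
      exact hp
    have han : ∀ i : Fin k, a i ≤ n := fun i => le_trans (Nat.le_add_left _ _) (h i)
    refine ⟨Finset.univ.filter (fun r : Fin k × Fin n × Fin n =>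
      (r.2.2 : ℕ) < a r.1 ∧
      (r.2.1 : ℕ) = a ⟨((r.1 : ℕ) + 1) % k, Nat.mod_lt _ hk⟩ + (r.2.2 : ℕ)), ?_, ?_⟩
    · constructor
      · rintro r hr s hs hne h1
        simp only [Finset.mem_filter, Finset.mem_univ, true_and] at hr hs
        have hcols : r.2.2 ≠ s.2.2 := by
          intro hc
          apply hne
          have : r.2.1 = s.2.1 := by
            apply Fin.ext
            rw [hr.2, hs.2, h1, hc]
          exact Prod.ext h1 (Prod.ext this hc)
        refine ⟨?_, hcols⟩
        intro hrow
        apply hcols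
        apply Fin.ext
        have := congrArg Fin.val hrow
        rw [hr.2, hs.2, h1] at this
        omega
      · rintro r hr s hs hsucc
        simp only [Finset.mem_filter, Finset.mem_univ, true_and] at hr hs
        intro heq
        have h1 : (r.2.1 : ℕ) = a s.1 + (r.2.2 : ℕ) := by
          rw [hr.2]
          congr 1
          congr 1
          exact Fin.ext hsucc
        have h2 : (s.2.2 : ℕ) < a s.1 := hs.1
        have := congrArg Fin.val heq
        omega
    · intro i
      unfold bCount
      rw [Finset.filter_filter]
      have hbound : ∀ t, t < a i → a ⟨((i : ℕ) + 1) % k, Nat.mod_lt _ hk⟩ + t < n := by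
        intro t ht
        have := hone i
        omega
      rw [← Finset.card_range (a i)]
      refine Finset.card_bij' (fun r _ => (r.2.2 : ℕ))
        (fun t ht => (i, ⟨a ⟨((i : ℕ) + 1) % k, Nat.mod_lt _ hk⟩ + t,
          hbound t (Finset.mem_range.mp ht)⟩,
          ⟨t, lt_of_lt_of_le (Finset.mem_range.mp ht) (han i)⟩)) ?_ ?_ ?_ ?_
      · intro r hr
        simp only [Finset.mem_filter, Finset.mem_univ, true_and] at hr
        obtain ⟨⟨h1, _⟩, h3⟩ := hr
        exact Finset.mem_range.mpr (h3 ▸ h1)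
      · intro t ht
        simp [Finset.mem_range.mp ht]
      · intro r hr
        simp only [Finset.mem_filter, Finset.mem_univ, true_and] at hr
        obtain ⟨⟨h1, h2⟩, h3⟩ := hr
        subst h3
        ext <;> simp [h2]
      · intro t ht
        simp
end

section
/- The number of ways to place m non-attacking rooks on the linear chained board B^-_{n,k} equals the sum over all compositions (a_1,...,a_k) with a_1+...+a_k = m satisfying a_{i-1}+a_i ≤ n (with a_0 = 0) of the product over i from 1 to k of C(n - a_{i-1}, a_i) · (n)_{a_i}, where (n)_a denotes the falling factorial n(n-1)···(n-a+1). -/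
/-!
A placement on `B⁻_{n,k}` is a `k`-tuple of rook placements, one per board, in which the columns
of board `i` avoid the rows of board `i - 1`. Build it board by board. A placement with `a` rooks
on one board whose columns avoid a given set of `p` rows amounts to a choice of `a` columns among
the `n - p` free ones together with an injective assignment of rows to them, so there are
`C(n - p, a) · (n)_a` of them, and its `a` rows are what the next board has to avoid. As this count
depends on the previous board only through its number of rooks, the placements with prescribed
board counts `(a_i)` number `∏ C(n - a_{i-1}, a_i) · (n)_{a_i}`; summing over the compositions of
`m` gives the formula, the terms with `a_{i-1} + a_i > n` being zero.
-/

open Finset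

theorem Nat.card_subtype_eq_sum_fiberwise {X Y : Type*} [Fintype X] [DecidableEq Y]
    {p : X → Prop} (f : X → Y) (t : Finset Y) (h : ∀ x, p x → f x ∈ t) :
    Nat.card {x // p x} = ∑ y ∈ t, Nat.card {x // p x ∧ f x = y} := by
  classical
  simp only [Nat.card_eq_fintype_card, Fintype.card_subtype]
  rw [card_eq_sum_card_fiberwise fun x hx => h x (mem_filter.mp hx).2]
  simp only [filter_filter]

theorem Nat.card_subtype_prod_eq_mul {X Y : Type*} [Finite X] [Finite Y]
    (A : X → Prop) (B : X → Y → Prop) (c : ℕ) (hB : ∀ x, A x → Nat.card {y // B x y} = c) :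
    Nat.card {p : X × Y // A p.1 ∧ B p.1 p.2} = Nat.card {x // A x} * c := by
  have := Fintype.ofFinite {x // A x}
  let e : {p : X × Y // A p.1 ∧ B p.1 p.2} ≃ Σ x : {x // A x}, {y // B x y} :=
    { toFun p := ⟨⟨p.1.1, p.2.1⟩, ⟨p.1.2, p.2.2⟩⟩
      invFun q := ⟨(q.1.1, q.2.1), q.1.2, q.2.2⟩ }
  rw [Nat.card_congr e, Nat.card_sigma, Finset.sum_congr rfl fun x _ => hB x.1 x.2, sum_const,
    Finset.card_univ, smul_eq_mul, Nat.card_eq_fintype_card]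

variable {α β : Type*}

def IsRookPlacement (S : Finset (α × β)) : Prop :=
  Set.InjOn Prod.fst (S : Set (α × β)) ∧ Set.InjOn Prod.snd (S : Set (α × β))

theorem isRookPlacement_iff {S : Finset (α × β)} :
    IsRookPlacement S ↔ ∀ x ∈ S, ∀ y ∈ S, x ≠ y → x.1 ≠ y.1 ∧ x.2 ≠ y.2 := by
  simp only [IsRookPlacement, Set.InjOn, mem_coe, ne_eq]
  constructor
  · intro h x hx y hy hxy
    exact ⟨fun h1 => hxy (h.1 hx hy h1), fun h2 => hxy (h.2 hx hy h2)⟩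
  · intro h
    exact ⟨fun x hx y hy h1 => by_contra fun hxy => (h x hx y hy hxy).1 h1,
      fun x hx y hy h2 => by_contra fun hxy => (h x hx y hy hxy).2 h2⟩

section Board

variable {C : Finset β}

def embeddingGraph (f : C ↪ α) : Finset (α × β) :=
  univ.map ⟨fun c => (f c, c.1), fun _ _ h => Subtype.ext (congrArg Prod.snd h)⟩

theorem mem_embeddingGraph {f : C ↪ α} {p : α × β} :
    p ∈ embeddingGraph f ↔ ∃ h : p.2 ∈ C, f ⟨p.2, h⟩ = p.1 := by
  constructor
  · rintro hp
    obtain ⟨c, -, rfl⟩ := mem_map.mp hp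
    exact ⟨c.2, rfl⟩
  · rintro ⟨h, hf⟩
    exact mem_map.mpr ⟨⟨p.2, h⟩, mem_univ _, Prod.ext hf rfl⟩

theorem isRookPlacement_embeddingGraph (f : C ↪ α) : IsRookPlacement (embeddingGraph f) := by
  refine ⟨fun p hp q hq hpq => ?_, fun p hp q hq hpq => ?_⟩ <;>
    obtain ⟨_, hfp⟩ := mem_embeddingGraph.mp hp <;> obtain ⟨_, hfq⟩ := mem_embeddingGraph.mp hq
  · exact Prod.ext hpq (congrArg Subtype.val (f.injective (hfp.trans (hpq.trans hfq.symm))))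
  · exact Prod.ext (hfp.symm.trans (by simp_rw [hpq]) |>.trans hfq) hpq

theorem image_snd_embeddingGraph [DecidableEq β] (f : C ↪ α) :
    (embeddingGraph f).image Prod.snd = C := by
  ext c
  refine ⟨fun hc => ?_, fun hc => ?_⟩
  · obtain ⟨p, hp, rfl⟩ := mem_image.mp hc
    exact (mem_embeddingGraph.mp hp).1
  · exact mem_image.mpr ⟨(f ⟨c, hc⟩, c), mem_embeddingGraph.mpr ⟨hc, rfl⟩, rfl⟩

theorem embeddingGraph_injective : Function.Injective (embeddingGraph (α := α) (C := C)) := by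
  intro f g hfg
  ext c
  have hc : ((f c, c.1) : α × β) ∈ embeddingGraph g := hfg ▸ mem_embeddingGraph.mpr ⟨c.2, rfl⟩
  obtain ⟨_, h⟩ := mem_embeddingGraph.mp hc
  exact h.symm

theorem exists_embeddingGraph_eq [DecidableEq β] {S : Finset (α × β)} (hS : IsRookPlacement S)
    (hC : S.image Prod.snd = C) : ∃ f : C ↪ α, embeddingGraph f = S := by
  have hrow (c : C) : ∃ x, (x, c.1) ∈ S := by
    obtain ⟨p, hp, hpc⟩ := mem_image.mp (hC.symm ▸ c.2 : c.1 ∈ S.image Prod.snd)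
    exact ⟨p.1, hpc ▸ hp⟩
  choose row hrow using hrow
  refine ⟨⟨row, fun c d h => Subtype.ext ?_⟩, ?_⟩
  · exact congrArg Prod.snd (hS.1 (hrow c) (hrow d) h)
  · ext p
    obtain ⟨x, c⟩ := p
    rw [mem_embeddingGraph]
    refine ⟨fun ⟨h, hx⟩ => (show row ⟨c, h⟩ = x from hx) ▸ hrow ⟨c, h⟩,
      fun hp => ⟨hC ▸ mem_image_of_mem _ hp, ?_⟩⟩
    exact congrArg Prod.fst (hS.2 (hrow ⟨c, _⟩) hp rfl)

theorem card_rookPlacement_image_snd_eq [Fintype α] [DecidableEq β] (C : Finset β) :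
    Nat.card {S : Finset (α × β) // IsRookPlacement S ∧ S.image Prod.snd = C} =
      (Fintype.card α).descFactorial C.card := by
  classical
  let graph (f : C ↪ α) : {S : Finset (α × β) // IsRookPlacement S ∧ S.image Prod.snd = C} :=
    ⟨embeddingGraph f, isRookPlacement_embeddingGraph f, image_snd_embeddingGraph f⟩
  have hgraph : Function.Bijective graph :=
    ⟨fun f g h => embeddingGraph_injective (congrArg Subtype.val h),
      fun S => (exists_embeddingGraph_eq S.2.1 S.2.2).imp fun _ hf => Subtype.ext hf⟩
  rw [← Nat.card_congr (Equiv.ofBijective graph hgraph), Nat.card_eq_fintype_card,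
    Fintype.card_embedding_eq, Fintype.card_coe]

theorem IsRookPlacement.card_image_fst [DecidableEq α] {S : Finset (α × β)}
    (hS : IsRookPlacement S) : (S.image Prod.fst).card = S.card :=
  card_image_of_injOn hS.1

theorem IsRookPlacement.card_image_snd [DecidableEq β] {S : Finset (α × β)}
    (hS : IsRookPlacement S) : (S.image Prod.snd).card = S.card :=
  card_image_of_injOn hS.2

theorem IsRookPlacement.card_le [Fintype α] [DecidableEq α] {S : Finset (α × β)}
    (hS : IsRookPlacement S) : S.card ≤ Fintype.card α :=
  hS.card_image_fst ▸ card_le_univ _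

theorem card_rookPlacement_disjoint [Fintype α] [Fintype β] [DecidableEq β] (F : Finset β)
    (a : ℕ) :
    Nat.card {S : Finset (α × β) //
        (IsRookPlacement S ∧ Disjoint F (S.image Prod.snd)) ∧ S.card = a} =
      (Fintype.card β - F.card).choose a * (Fintype.card α).descFactorial a := by
  have hfiber : ∀ C ∈ powersetCard a Fᶜ,
      Nat.card {S : Finset (α × β) // ((IsRookPlacement S ∧ Disjoint F (S.image Prod.snd)) ∧
        S.card = a) ∧ S.image Prod.snd = C} = (Fintype.card α).descFactorial a := by
    intro C hC
    obtain ⟨hCF, rfl⟩ := mem_powersetCard.mp hC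
    rw [← card_rookPlacement_image_snd_eq C]
    refine Nat.card_congr (Equiv.subtypeEquivRight fun S => ⟨fun h => ⟨h.1.1.1, h.2⟩, ?_⟩)
    rintro ⟨hS, rfl⟩
    exact ⟨⟨⟨hS, subset_compl_iff_disjoint_left.mp hCF⟩, hS.card_image_snd.symm⟩, rfl⟩
  rw [Nat.card_subtype_eq_sum_fiberwise (fun S => S.image Prod.snd) (powersetCard a Fᶜ),
    sum_congr rfl hfiber, sum_const, card_powersetCard, card_compl, smul_eq_mul]
  rintro S ⟨⟨hS, hF⟩, rfl⟩
  exact mem_powersetCard.mpr ⟨subset_compl_iff_disjoint_left.mpr hF, hS.card_image_snd⟩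

end Board

theorem forall_disjoint_cons_empty_castSucc_iff {k : ℕ} (g h : Fin k → Finset α) :
    (∀ i, Disjoint ((Fin.cons ∅ g : Fin (k + 1) → Finset α) i.castSucc) (h i)) ↔
      ∀ i j : Fin k, i.val + 1 = j.val → Disjoint (g i) (h j) := by
  constructor
  · intro H i j hij
    have hj : j.castSucc = i.succ := Fin.ext (by simp [hij])
    simpa only [hj, Fin.cons_succ] using H j
  · rintro H ⟨_ | j, hj⟩
    · exact disjoint_bot_left
    · exact H ⟨j, by omega⟩ ⟨j + 1, hj⟩ rfl

section Chain

variable [DecidableEq α] {k : ℕ}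

-- `F` stands for the rows of a board preceding board `0`: the columns of every board must avoid
-- the rows of the board before it.
def IsRookChain (F : Finset α) (P : Fin k → Finset (α × α)) : Prop :=
  ∀ i, IsRookPlacement (P i) ∧
    Disjoint ((Fin.cons F fun j => (P j).image Prod.fst : Fin (k + 1) → Finset α) i.castSucc)
      ((P i).image Prod.snd)

theorem isRookChain_cons_iff {F : Finset α} {S : Finset (α × α)} {P : Fin k → Finset (α × α)} :
    IsRookChain F (Fin.cons S P : Fin (k + 1) → Finset (α × α)) ↔
      (IsRookPlacement S ∧ Disjoint F (S.image Prod.snd)) ∧ IsRookChain (S.image Prod.fst) P := by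
  have hrows : (fun j => ((Fin.cons S P : Fin (k + 1) → Finset (α × α)) j).image Prod.fst) =
      (Fin.cons (S.image Prod.fst) fun j => (P j).image Prod.fst : Fin (k + 1) → Finset α) :=
    Fin.comp_cons (fun T : Finset (α × α) => T.image Prod.fst) S P
  simp only [IsRookChain, Fin.forall_fin_succ, hrows, Fin.cons_zero, Fin.cons_succ,
    Fin.castSucc_zero, ← Fin.succ_castSucc]

theorem card_rookChain [Fintype α] (F : Finset α) (a : Fin k → ℕ) :
    Nat.card {P : Fin k → Finset (α × α) // IsRookChain F P ∧ ∀ i, (P i).card = a i} =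
      ∏ i, (Fintype.card α - (Fin.cons F.card a : Fin (k + 1) → ℕ) i.castSucc).choose (a i) *
        (Fintype.card α).descFactorial (a i) := by
  induction k generalizing F with
  | zero => simp [IsRookChain]
  | succ k ih =>
    let headOK (S : Finset (α × α)) := (IsRookPlacement S ∧ Disjoint F (S.image Prod.snd)) ∧
      S.card = a 0
    let tailOK (S : Finset (α × α)) (P : Fin k → Finset (α × α)) :=
      IsRookChain (S.image Prod.fst) P ∧ ∀ i, (P i).card = Fin.tail a i
    have splitHead :
        {p : Finset (α × α) × (Fin k → Finset (α × α)) // headOK p.1 ∧ tailOK p.1 p.2} ≃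
        {P : Fin (k + 1) → Finset (α × α) // IsRookChain F P ∧ ∀ i, (P i).card = a i} :=
      (Fin.consEquiv fun _ => Finset (α × α)).subtypeEquiv fun ⟨S, P⟩ => by
        change _ ↔ IsRookChain F (Fin.cons S P : Fin (k + 1) → Finset (α × α)) ∧
          ∀ i, ((Fin.cons S P : Fin (k + 1) → Finset (α × α)) i).card = a i
        simp only [headOK, tailOK, isRookChain_cons_iff, Fin.forall_fin_succ, Fin.cons_zero,
          Fin.cons_succ, Fin.tail]
        tauto
    rw [← Nat.card_congr splitHead, Nat.card_subtype_prod_eq_mul headOK tailOK _ fun S hS => by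
        rw [ih, hS.1.1.card_image_fst, hS.2, Fin.cons_self_tail],
      card_rookPlacement_disjoint, Fin.prod_univ_succ]
    simp only [Fin.castSucc_zero, Fin.cons_zero, ← Fin.succ_castSucc, Fin.cons_succ, Fin.tail]

theorem card_rookChain_of_sum_card_eq [Fintype α] (F : Finset α) (m : ℕ) :
    Nat.card {P : Fin k → Finset (α × α) // IsRookChain F P ∧ ∑ i, (P i).card = m} =
      ∑ a ∈ (Fintype.piFinset fun _ : Fin k => range (Fintype.card α + 1)).filter
          (fun a => ∑ i, a i = m),
        ∏ i, (Fintype.card α - (Fin.cons F.card a : Fin (k + 1) → ℕ) i.castSucc).choose (a i) *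
          (Fintype.card α).descFactorial (a i) := by
  rw [Nat.card_subtype_eq_sum_fiberwise (fun P i => (P i).card)]
  · refine sum_congr rfl fun a ha => ?_
    rw [← card_rookChain F a]
    refine Nat.card_congr (Equiv.subtypeEquivRight fun P => ?_)
    rw [funext_iff]
    refine ⟨fun ⟨⟨hP, _⟩, hPa⟩ => ⟨hP, hPa⟩, fun ⟨hP, hPa⟩ => ⟨⟨hP, ?_⟩, hPa⟩⟩
    simp only [hPa, (mem_filter.mp ha).2]
  · rintro P ⟨hP, rfl⟩
    simp only [mem_filter, Fintype.mem_piFinset, mem_range, Nat.lt_succ_iff, and_true]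
    exact fun i => (hP i).1.card_le

end Chain

theorem prevL_eq_cons_castSucc {k : ℕ} (a : Fin k → ℕ) (i : Fin k) :
    prevL a i = (Fin.cons 0 a : Fin (k + 1) → ℕ) i.castSucc := by
  obtain ⟨_ | j, hj⟩ := i <;> rfl

theorem prevL_le {k n : ℕ} {a : Fin k → ℕ} (ha : ∀ i, a i ≤ n) (i : Fin k) : prevL a i ≤ n := by
  unfold prevL
  split_ifs
  exacts [Nat.zero_le n, ha _]

section Split

variable (ι γ : Type*) [Fintype ι]

noncomputable def finsetProdEquivPi : Finset (ι × γ) ≃ (ι → Finset γ) where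
  toFun R i := R.preimage (Prod.mk i) (Prod.mk_right_injective i).injOn
  invFun P := (univ.sigma P).map (Equiv.sigmaEquivProd ι γ).toEmbedding
  left_inv R := by ext ⟨i, x⟩; simp
  right_inv P := by ext i x; simp

variable {ι γ}

theorem mem_finsetProdEquivPi_symm {P : ι → Finset γ} {r : ι × γ} :
    r ∈ (finsetProdEquivPi ι γ).symm P ↔ r.2 ∈ P r.1 := by
  simp [finsetProdEquivPi]

theorem card_finsetProdEquivPi_symm (P : ι → Finset γ) :
    ((finsetProdEquivPi ι γ).symm P).card = ∑ i, (P i).card := by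
  simp [finsetProdEquivPi]

end Split

theorem linNonAtt_finsetProdEquivPi_symm_iff {n k : ℕ} (P : Fin k → Finset (Fin n × Fin n)) :
    LinNonAtt n k ((finsetProdEquivPi _ _).symm P) ↔ IsRookChain ∅ P := by
  rw [IsRookChain, forall_and,
    forall_disjoint_cons_empty_castSucc_iff (fun i => (P i).image Prod.fst)]
  simp only [LinNonAtt, isRookPlacement_iff, Prod.forall, mem_finsetProdEquivPi_symm,
    disjoint_left, mem_image, Prod.exists, exists_and_right, exists_eq_right, not_exists, ne_eq,
    Prod.mk.injEq]
  refine and_congr ⟨fun h i x y hxy x' y' hxy' hne => h i x y hxy i x' y' hxy' (by tauto) rfl, ?_⟩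
    ⟨fun h i j hij x ⟨y, hxy⟩ x' hx' => h i x y hxy j x' x hx' hij rfl,
      fun h i x y hxy j x' y' hxy' hij hxy'' => h i j hij ⟨y, hxy⟩ x' (hxy'' ▸ hxy')⟩
  rintro h i x y hxy j x' y' hxy' hne rfl
  exact h i x y hxy x' y' hxy' (by tauto)

/-- The number of placements of `m` non-attacking rooks on the linear chained board. -/
theorem linear_rook_count (n k m : ℕ) :
    Nat.card {R : Finset (Fin k × Fin n × Fin n) // LinNonAtt n k R ∧ R.card = m} =
      ∑ a ∈ (Fintype.piFinset fun _ : Fin k => Finset.range (n + 1)).filter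
          (fun a => (∑ i, a i) = m ∧ ∀ i, prevL a i + a i ≤ n),
        ∏ i, Nat.choose (n - prevL a i) (a i) * Nat.descFactorial n (a i) := by
  have hchain : {P : Fin k → Finset (Fin n × Fin n) // IsRookChain ∅ P ∧ ∑ i, (P i).card = m} ≃
      {R // LinNonAtt n k R ∧ R.card = m} :=
    (finsetProdEquivPi (Fin k) (Fin n × Fin n)).symm.subtypeEquiv fun P => by
      rw [linNonAtt_finsetProdEquivPi_symm_iff, card_finsetProdEquivPi_symm]
  rw [← Nat.card_congr hchain, card_rookChain_of_sum_card_eq, ← filter_filter]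
  simp only [Fintype.card_fin, card_empty, ← prevL_eq_cons_castSucc]
  refine (sum_filter_of_ne fun a ha hprod i => ?_).symm
  have hle : ∀ j, a j ≤ n := by simpa [Nat.lt_succ_iff] using (mem_filter.mp ha).1
  have hchoose := left_ne_zero_of_mul (prod_ne_zero_iff.mp hprod i (mem_univ i))
  have hai : a i ≤ n - prevL a i := not_lt.mp fun h => hchoose (Nat.choose_eq_zero_of_lt h)
  have hprev := prevL_le hle i
  omega
end

section
/- The number of ways to place m non-attacking rooks on the circular chained board B^∘_{n,k} equals the sum over all compositions (a_1,...,a_k) with a_1+...+a_k = m satisfying a_{i-1}+a_i ≤ n cyclically (a_0 = a_k) of the product over i from 1 to k of C(n - a_{i-1}, a_i) · (n)_{a_i}. -/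
/-!
A non-attacking placement is the same as a choice of row sets `ρ i ⊆ [n]`, one per board,
together with, for every board `i`, an injection of `ρ i` into the complement of `ρ (i - 1)`
assigning the columns: column `j` of board `i` is attacked from outside the board exactly by a
rook in row `j` of board `i - 1`. With `|ρ i| = a i` this leaves `∏ (n - a (i-1))_(a i)`
placements, and there are `∏ C(n, a i)` families of row sets with these sizes. Finally
`C(n, a) (n - b)_a = C(n - b, a) (n)_a`, both sides being `a! C(n, a) C(n - b, a)`, and the
terms with `a (i-1) + a i > n` vanish.
-/

open Finset

theorem Fintype.sum_pi_finset_apply_card {ι α M : Type*} [Fintype ι] [DecidableEq ι]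
    [Fintype α] [AddCommMonoid M] (g : (ι → ℕ) → M) :
    ∑ ρ : ι → Finset α, g (fun i => #(ρ i)) =
      ∑ a ∈ Fintype.piFinset fun _ : ι => range (Fintype.card α + 1),
        (∏ i, (Fintype.card α).choose (a i)) • g a := by
  classical
  rw [← sum_fiberwise_of_maps_to' (g := fun (ρ : ι → Finset α) i => #(ρ i)) (f := g)
    (t := Fintype.piFinset fun _ : ι => range (Fintype.card α + 1))]
  · refine Finset.sum_congr rfl fun a _ => ?_
    have hfiber : ({ρ | (fun i => #(ρ i)) = a} : Finset (ι → Finset α)) =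
        Fintype.piFinset fun i => powersetCard (a i) univ := by
      ext ρ
      simp [funext_iff]
    rw [Finset.sum_const, hfiber, Fintype.card_piFinset]
    simp [card_powersetCard]
  · intro ρ _
    simpa [Nat.lt_succ_iff] using fun i => card_le_univ (ρ i)

theorem Nat.choose_mul_descFactorial_comm (m n a : ℕ) :
    n.choose a * m.descFactorial a = m.choose a * n.descFactorial a := by
  rw [Nat.descFactorial_eq_factorial_mul_choose, Nat.descFactorial_eq_factorial_mul_choose]
  ring

namespace ChainedBoard

variable {n k : ℕ}

def cycPrev (i : Fin k) : Fin k := ⟨(i.val + (k - 1)) % k, Nat.mod_lt _ i.pos⟩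

lemma prevC_eq_apply_cycPrev (a : Fin k → ℕ) (i : Fin k) : prevC a i = a (cycPrev i) := rfl

lemma succ_cycPrev_mod (i : Fin k) : ((cycPrev i : ℕ) + 1) % k = i := by
  have := i.isLt
  simp only [cycPrev, Nat.mod_add_mod]
  rw [show (i : ℕ) + (k - 1) + 1 = i + k by omega, Nat.add_mod_right, Nat.mod_eq_of_lt this]

lemma cycPrev_eq_of_succ_mod {i j : Fin k} (h : ((i : ℕ) + 1) % k = j) : cycPrev j = i := by
  have := i.isLt
  ext
  simp only [cycPrev, ← h, Nat.mod_add_mod]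
  rw [show (i : ℕ) + 1 + (k - 1) = i + k by omega, Nat.add_mod_right, Nat.mod_eq_of_lt this]

def rows (R : Finset (Fin k × Fin n × Fin n)) (i : Fin k) : Finset (Fin n) :=
  (R.filter fun x => x.1 = i).image fun x => x.2.1

@[simp]
lemma mem_rows {R : Finset (Fin k × Fin n × Fin n)} {i : Fin k} {r : Fin n} :
    r ∈ rows R i ↔ ∃ c, (i, r, c) ∈ R := by
  simp [rows]

abbrev ColumnChoice (ρ : Fin k → Finset (Fin n)) : Type :=
  ∀ i, ρ i ↪ ((ρ (cycPrev i))ᶜ : Finset (Fin n))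

def ofColumns {ρ : Fin k → Finset (Fin n)} (σ : ColumnChoice ρ) :
    Finset (Fin k × Fin n × Fin n) :=
  univ.filter fun x => ∃ h : x.2.1 ∈ ρ x.1, (σ x.1 ⟨x.2.1, h⟩ : Fin n) = x.2.2

variable {ρ : Fin k → Finset (Fin n)}

@[simp]
lemma mem_ofColumns {σ : ColumnChoice ρ} {i : Fin k} {r c : Fin n} :
    (i, r, c) ∈ ofColumns σ ↔ ∃ h : r ∈ ρ i, (σ i ⟨r, h⟩ : Fin n) = c := by
  simp [ofColumns]

lemma rows_ofColumns (σ : ColumnChoice ρ) : rows (ofColumns σ) = ρ := by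
  ext i r
  simp

lemma ofColumns_injective : Function.Injective (ofColumns (ρ := ρ)) := by
  intro σ τ h
  funext i
  refine Function.Embedding.ext fun r => ?_
  have : (i, r.1, (σ i r : Fin n)) ∈ ofColumns τ := h ▸ mem_ofColumns.2 ⟨r.2, rfl⟩
  exact Subtype.ext (mem_ofColumns.1 this).2.symm

lemma circNonAtt_ofColumns (σ : ColumnChoice ρ) : CircNonAtt n k (ofColumns σ) := by
  refine ⟨?_, ?_⟩
  · rintro ⟨i, r, c⟩ hx ⟨j, r', c'⟩ hy hne (rfl : i = j)
    obtain ⟨hr, rfl⟩ := mem_ofColumns.1 hx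
    obtain ⟨hr', rfl⟩ := mem_ofColumns.1 hy
    have hrr : r ≠ r' := by rintro rfl; exact hne rfl
    refine ⟨hrr, fun hc => hrr ?_⟩
    simpa using (σ i).injective (Subtype.ext hc)
  · rintro ⟨i, r, c⟩ hx ⟨j, r', c'⟩ hy hij
    obtain ⟨hr, -⟩ := mem_ofColumns.1 hx
    obtain ⟨hr', rfl⟩ := mem_ofColumns.1 hy
    have hcol : (σ j ⟨r', hr'⟩ : Fin n) ∉ ρ (cycPrev j) :=
      mem_compl.1 (σ j ⟨r', hr'⟩).2
    generalize (σ j ⟨r', hr'⟩ : Fin n) = c' at hcol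
    rw [cycPrev_eq_of_succ_mod hij] at hcol
    rintro (rfl : r = c')
    exact hcol hr

lemma card_columnChoice (ρ : Fin k → Finset (Fin n)) :
    Fintype.card (ColumnChoice ρ) = ∏ i, (n - #(ρ (cycPrev i))).descFactorial #(ρ i) := by
  simp [ColumnChoice, Fintype.card_pi, Fintype.card_embedding_eq]

end ChainedBoard

namespace CircNonAtt

open ChainedBoard

variable {n k : ℕ} {R : Finset (Fin k × Fin n × Fin n)}

lemma col_eq (hR : CircNonAtt n k R) {i : Fin k} {r c c' : Fin n}
    (h : (i, r, c) ∈ R) (h' : (i, r, c') ∈ R) : c = c' := by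
  by_contra hne
  exact (hR.1 _ h _ h' (by simp [hne]) rfl).1 rfl

lemma row_eq (hR : CircNonAtt n k R) {i : Fin k} {r r' c : Fin n}
    (h : (i, r, c) ∈ R) (h' : (i, r', c) ∈ R) : r = r' := by
  by_contra hne
  exact (hR.1 _ h _ h' (by simp [hne]) rfl).2 rfl

lemma row_ne_col (hR : CircNonAtt n k R) {i : Fin k} {r c r' c' : Fin n}
    (h : (cycPrev i, r, c) ∈ R) (h' : (i, r', c') ∈ R) : r ≠ c' :=
  hR.2 _ h _ h' (succ_cycPrev_mod i)

lemma card_rows (hR : CircNonAtt n k R) (i : Fin k) :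
    #(rows R i) = #(R.filter fun x => x.1 = i) := by
  refine card_image_of_injOn ?_
  rintro ⟨j, r, c⟩ hx ⟨j', r', c'⟩ hy (rfl : r = r')
  simp only [coe_filter, Set.mem_ofPred_eq] at hx hy
  obtain ⟨hx, rfl⟩ := hx
  obtain ⟨hy, rfl⟩ := hy
  rw [hR.col_eq hx hy]

lemma card_eq_sum_card_rows (hR : CircNonAtt n k R) : #R = ∑ i, #(rows R i) := by
  simp only [hR.card_rows]
  exact card_eq_sum_card_fiberwise fun x _ => mem_univ x.1

lemma exists_ofColumns_eq (hR : CircNonAtt n k R) :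
    ∃ σ : ColumnChoice (rows R), ofColumns σ = R := by
  choose col hcol using fun i (r : rows R i) => mem_rows.1 r.2
  have col_mem_compl i r : col i r ∈ (rows R (cycPrev i))ᶜ := by
    rw [mem_compl, mem_rows]
    rintro ⟨c, hc⟩
    exact hR.row_ne_col hc (hcol i r) rfl
  have col_injective i : Function.Injective (col i) := fun r r' h =>
    Subtype.ext (hR.row_eq (hcol i r) (h ▸ hcol i r'))
  refine ⟨fun i => ⟨fun r => ⟨col i r, col_mem_compl i r⟩, fun r r' h =>
    col_injective i (congrArg Subtype.val h)⟩, ?_⟩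
  ext ⟨i, r, c⟩
  simp only [mem_ofColumns]
  constructor
  · rintro ⟨hr, rfl⟩
    exact hcol i ⟨r, hr⟩
  · intro h
    have hr : r ∈ rows R i := mem_rows.2 ⟨c, h⟩
    exact ⟨hr, hR.col_eq (hcol i ⟨r, hr⟩) h⟩

end CircNonAtt

namespace ChainedBoard

variable {n k : ℕ}

open scoped Classical in
theorem card_circNonAtt_rows_eq (ρ : Fin k → Finset (Fin n)) :
    #{R : Finset (Fin k × Fin n × Fin n) | CircNonAtt n k R ∧ rows R = ρ} =
      ∏ i, (n - #(ρ (cycPrev i))).descFactorial #(ρ i) := by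
  have himage : univ.image (ofColumns (ρ := ρ)) =
      ({R | CircNonAtt n k R ∧ rows R = ρ} : Finset (Finset (Fin k × Fin n × Fin n))) := by
    ext R
    simp only [mem_image, mem_univ, true_and, mem_filter]
    constructor
    · rintro ⟨σ, rfl⟩
      exact ⟨circNonAtt_ofColumns σ, rows_ofColumns σ⟩
    · rintro ⟨hR, rfl⟩
      exact hR.exists_ofColumns_eq
  rw [← himage, card_image_of_injective _ ofColumns_injective, card_univ, card_columnChoice]

open scoped Classical in
theorem card_circNonAtt_eq_sum_rows (m : ℕ) :
    #{R : Finset (Fin k × Fin n × Fin n) | CircNonAtt n k R ∧ #R = m} =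
      ∑ ρ : Fin k → Finset (Fin n) with ∑ i, #(ρ i) = m,
        ∏ i, (n - #(ρ (cycPrev i))).descFactorial #(ρ i) := by
  rw [card_eq_sum_card_fiberwise (f := rows) (t := {ρ | ∑ i, #(ρ i) = m})]
  · refine sum_congr rfl fun ρ hρ => ?_
    rw [← card_circNonAtt_rows_eq, filter_filter]
    refine congrArg card (filter_congr fun R _ => ⟨fun h => ⟨h.1.1, h.2⟩, fun h => ?_⟩)
    refine ⟨⟨h.1, ?_⟩, h.2⟩
    rw [h.1.card_eq_sum_card_rows, h.2]
    exact (mem_filter.1 hρ).2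
  · intro R hR
    simp only [coe_filter, mem_univ, true_and, Set.mem_ofPred_eq] at hR ⊢
    rw [← hR.2, hR.1.card_eq_sum_card_rows]

theorem sum_rows_eq_sum_sizes (m : ℕ) :
    ∑ ρ : Fin k → Finset (Fin n) with ∑ i, #(ρ i) = m,
        ∏ i, (n - #(ρ (cycPrev i))).descFactorial #(ρ i) =
      ∑ a ∈ (Fintype.piFinset fun _ : Fin k => range (n + 1)) with ∑ i, a i = m,
        ∏ i, (n - prevC a i).choose (a i) * n.descFactorial (a i) := by
  rw [sum_filter, sum_filter]
  have := Fintype.sum_pi_finset_apply_card (α := Fin n) fun a : Fin k → ℕ =>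
    if ∑ i, a i = m then ∏ i, (n - a (cycPrev i)).descFactorial (a i) else 0
  rw [Fintype.card_fin] at this
  convert this using 2 with a
  rw [smul_eq_mul, mul_ite, mul_zero, ← prod_mul_distrib]
  simp_rw [Nat.choose_mul_descFactorial_comm (n - _) n, prevC_eq_apply_cycPrev]

lemma prevC_add_le_of_prod_ne_zero {a : Fin k → ℕ} (ha : ∀ i, a i ≤ n)
    (h : ∏ i, (n - prevC a i).choose (a i) * n.descFactorial (a i) ≠ 0) (i : Fin k) :
    prevC a i + a i ≤ n := by
  have : prevC a i ≤ n := ha (cycPrev i)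
  by_contra hlt
  exact h (prod_eq_zero (mem_univ i) (by rw [Nat.choose_eq_zero_of_lt (by omega), zero_mul]))

end ChainedBoard

open ChainedBoard in
/-- The number of placements of `m` non-attacking rooks on the circular chained board. -/
theorem circular_rook_count (n k m : ℕ) :
    Nat.card {R : Finset (Fin k × Fin n × Fin n) // CircNonAtt n k R ∧ R.card = m} =
      ∑ a ∈ (Fintype.piFinset fun _ : Fin k => Finset.range (n + 1)).filter
          (fun a => (∑ i, a i) = m ∧ ∀ i, prevC a i + a i ≤ n),
        ∏ i, Nat.choose (n - prevC a i) (a i) * Nat.descFactorial n (a i) := by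
  classical
  calc Nat.card {R : Finset (Fin k × Fin n × Fin n) // CircNonAtt n k R ∧ R.card = m}
      = #{R : Finset (Fin k × Fin n × Fin n) | CircNonAtt n k R ∧ #R = m} := by
        rw [Nat.card_eq_fintype_card, Fintype.card_subtype]
    _ = ∑ ρ : Fin k → Finset (Fin n) with ∑ i, #(ρ i) = m,
          ∏ i, (n - #(ρ (cycPrev i))).descFactorial #(ρ i) := card_circNonAtt_eq_sum_rows m
    _ = ∑ a ∈ (Fintype.piFinset fun _ : Fin k => range (n + 1)) with ∑ i, a i = m,
          ∏ i, (n - prevC a i).choose (a i) * n.descFactorial (a i) := sum_rows_eq_sum_sizes m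
    _ = _ := by
        rw [← filter_filter]
        refine (sum_filter_of_ne fun a ha h => ?_).symm
        have hle i : a i ≤ n := by
          simpa [Nat.lt_succ_iff] using Fintype.mem_piFinset.1 (mem_filter.1 ha).1 i
        exact prevC_add_le_of_prod_ne_zero hle h
end

section
/- The maximum number of non-attacking rooks that can be placed on the linear chained board B^-_{n,k} is n·⌈k/2⌉. -/
lemma even_count : ∀ k, ((Finset.range k).filter (fun i => i % 2 = 0)).card = (k + 1) / 2 := by
  intro k
  induction k with
  | zero => simp
  | succ k ih =>
    rw [Finset.range_add_one, Finset.filter_insert]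
    by_cases h : k % 2 = 0
    · rw [if_pos h, Finset.card_insert_of_notMem (by simp), ih]
      omega
    · rw [if_neg h, ih]
      omega

lemma sum_pair_bound (n : ℕ) (f : ℕ → ℕ) (h1 : ∀ i, f i ≤ n)
    (h2 : ∀ i, f i + f (i + 1) ≤ n) :
    ∀ m, ∑ i ∈ Finset.range m, f i ≤ n * ((m + 1) / 2) := by
  intro m
  induction m using Nat.strong_induction_on with
  | _ m ih =>
    match m with
    | 0 => simp
    | 1 => simpa using h1 0
    | (m + 2) =>
      have hm := ih m (by omega)
      rw [Finset.sum_range_succ, Finset.sum_range_succ]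
      have h := h2 m
      have he : (m + 2 + 1) / 2 = (m + 1) / 2 + 1 := by omega
      calc (∑ i ∈ Finset.range m, f i) + f m + f (m + 1)
          ≤ n * ((m + 1) / 2) + (f m + f (m + 1)) := by omega
        _ ≤ n * ((m + 1) / 2) + n := by omega
        _ = n * ((m + 2 + 1) / 2) := by rw [he]; ring

/-- The maximum number of non-attacking rooks on the linear chained board is `n * ⌈k/2⌉`. -/
theorem linear_max_rooks (n k : ℕ) :
    IsGreatest {m | ∃ R : Finset (Fin k × Fin n × Fin n),
        LinNonAtt n k R ∧ R.card = m} (n * ((k + 1) / 2)) := by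
  constructor
  · -- construction
    refine ⟨(Finset.univ.filter fun i : Fin k => i.val % 2 = 0) ×ˢ
      ((Finset.univ : Finset (Fin n)).image fun j => (j, j)), ?_, ?_⟩
    · constructor
      · rintro r hr s hs hne heq
        simp only [Finset.mem_product, Finset.mem_filter, Finset.mem_image] at hr hs
        obtain ⟨⟨-, -⟩, a, -, ha⟩ := hr
        obtain ⟨⟨-, -⟩, b, -, hb⟩ := hs
        have hab : a ≠ b := by
          rintro rfl
          exact hne (Prod.ext heq (ha ▸ hb ▸ rfl))
        rw [← ha, ← hb]
        exact ⟨hab, hab⟩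
      · rintro r hr s hs heq
        simp only [Finset.mem_product, Finset.mem_filter, Finset.mem_image] at hr hs
        omega
    · rw [Finset.card_product, Finset.card_image_of_injective _ (by intro a b h; exact (Prod.mk.injEq _ _ _ _ ▸ h).1)]
      rw [Finset.card_univ, Fintype.card_fin]
      have : (Finset.univ.filter fun i : Fin k => i.val % 2 = 0).card
          = ((Finset.range k).filter (fun i => i % 2 = 0)).card := by
        apply Finset.card_bij (fun a _ => a.val)
        · intro a ha
          simp only [Finset.mem_filter, Finset.mem_univ, true_and] at ha
          simp [Finset.mem_filter, Finset.mem_range, a.isLt, ha]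
        · intro a _ b _ h
          exact Fin.ext h
        · intro b hb
          simp only [Finset.mem_filter, Finset.mem_range] at hb
          exact ⟨⟨b, hb.1⟩, by simp [hb.2], rfl⟩
      rw [this, even_count k, Nat.mul_comm]
  · -- upper bound
    rintro m ⟨R, ⟨h1, h2⟩, rfl⟩
    set f : ℕ → ℕ := fun i => (R.filter fun r => r.1.val = i).card with hf
    have hcard : R.card = ∑ i ∈ Finset.range k, f i := by
      exact Finset.card_eq_sum_card_fiberwise (f := fun r : Fin k × Fin n × Fin n => (r.1 : ℕ))
        (fun (x : Fin k × Fin n × Fin n) _ => Finset.mem_range.mpr x.1.isLt)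
    have hle : ∀ i, f i ≤ n := by
      intro i
      have : f i ≤ (Finset.univ : Finset (Fin n)).card := by
        apply Finset.card_le_card_of_injOn (fun r => r.2.1) (fun _ _ => Finset.mem_univ _)
        intro r hr s hs hrs
        simp only [Finset.mem_coe, Finset.mem_filter] at hr hs
        by_contra hne
        exact (h1 r hr.1 s hs.1 hne (Fin.ext (hr.2.trans hs.2.symm))).1 hrs
      simpa using this
    have hpair : ∀ i, f i + f (i + 1) ≤ n := by
      intro i
      by_cases hik : i + 1 < k
      · have hsplit : f i + f (i + 1)
            = (R.filter fun r => r.1.val = i ∨ r.1.val = i + 1).card := by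
          rw [Finset.filter_or, Finset.card_union_of_disjoint]
          rw [Finset.disjoint_filter]
          intro x _ hx
          omega
        rw [hsplit]
        have : (R.filter fun r => r.1.val = i ∨ r.1.val = i + 1).card
            ≤ (Finset.univ : Finset (Fin n)).card := by
          apply Finset.card_le_card_of_injOn
            (fun r => if r.1.val = i then r.2.1 else r.2.2) (fun _ _ => Finset.mem_univ _)
          intro r hr s hs hrs
          change (if (r.1:ℕ) = i then r.2.1 else r.2.2)
            = (if (s.1:ℕ) = i then s.2.1 else s.2.2) at hrs
          simp only [Finset.mem_coe, Finset.mem_filter] at hr hs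
          obtain ⟨hrR, hri⟩ := hr
          obtain ⟨hsR, hsi⟩ := hs
          rcases hri with hri | hri <;> rcases hsi with hsi | hsi
          · simp only [hri, hsi, if_pos rfl] at hrs
            by_contra hne
            exact (h1 r hrR s hsR hne (Fin.ext (hri.trans hsi.symm))).1 hrs
          · rw [if_pos hri, if_neg (by omega)] at hrs
            exact absurd hrs (h2 r hrR s hsR (by omega))
          · rw [if_neg (by omega), if_pos hsi] at hrs
            exact absurd hrs.symm (h2 s hsR r hrR (by omega))
          · rw [if_neg (by omega), if_neg (by omega)] at hrs
            by_contra hne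
            exact (h1 r hrR s hsR hne (Fin.ext (hri.trans hsi.symm))).2 hrs
        simpa using this
      · have : f (i + 1) = 0 := by
          rw [hf]
          simp only [Finset.card_eq_zero, Finset.filter_eq_empty_iff]
          intro r _
          have := r.1.isLt
          omega
        rw [this]
        simpa using hle i
    rw [hcard]
    exact sum_pair_bound n f hle hpair k
end

section
/- The maximum of a_1 + ... + a_k over all tuples (a_1,...,a_k) of nonnegative integers satisfying a_{i-1} + a_i ≤ n cyclically (with a_0 = a_k) is ⌊nk/2⌋, for k ≥ 2. -/
lemma sum_alt_aux (n k : ℕ) :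
    ∑ i ∈ Finset.range k, (if i % 2 = 0 then n / 2 else n - n / 2) = n * k / 2 := by
  induction k with
  | zero => simp
  | succ k ih =>
    rw [Finset.sum_range_succ, ih]
    have h : n * (k + 1) = n * k + n := by ring
    have h2 : n * k % 2 = n % 2 * (k % 2) % 2 := Nat.mul_mod n k 2
    rcases Nat.mod_two_eq_zero_or_one k with hke | hke <;>
      rcases Nat.mod_two_eq_zero_or_one n with hne | hne <;>
      rw [hke, hne] at h2 <;> norm_num at h2 <;> split <;> omega

/-- For `k ≥ 2`, the maximum of `a_1 + ... + a_k` over tuples with cyclic adjacent sums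
at most `n` is `⌊nk/2⌋`. -/
theorem circular_max_sum (n k : ℕ) (hk : 2 ≤ k) :
    IsGreatest {s | ∃ a : Fin k → ℕ,
        (∀ i, prevC a i + a i ≤ n) ∧ (∑ i, a i) = s} (n * k / 2) := by
  haveI : NeZero k := ⟨by omega⟩
  constructor
  · refine ⟨fun i => if i.val % 2 = 0 then n / 2 else n - n / 2, fun i => ?_, ?_⟩
    · unfold prevC
      rcases Nat.eq_zero_or_pos i.val with h0 | h1
      · have hj : (i.val + (k - 1)) % k = k - 1 := by
          rw [h0, Nat.zero_add, Nat.mod_eq_of_lt (by omega)]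
        simp only [hj]
        split <;> split <;> omega
      · have hj : (i.val + (k - 1)) % k = i.val - 1 := by
          have he : i.val + (k - 1) = (i.val - 1) + k := by omega
          rw [he, Nat.add_mod_right, Nat.mod_eq_of_lt (by omega)]
        have hi := i.isLt
        simp only [hj]
        split <;> split <;> omega
    · rw [Fin.sum_univ_eq_sum_range (fun i => if i % 2 = 0 then n / 2 else n - n / 2) k]
      exact sum_alt_aux n k
  · rintro s ⟨a, ha, rfl⟩
    have h1v : ((1 : Fin k)).val = 1 := by
      have : (1 : Fin k).val = 1 % k := rfl
      rw [this, Nat.mod_eq_of_lt (by omega)]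
    have hperm : ∑ i, prevC a i = ∑ i, a i := by
      rw [← Equiv.sum_comp (Equiv.addRight (1 : Fin k)) (fun i => prevC a i)]
      refine Finset.sum_congr rfl fun i _ => ?_
      show prevC a (i + 1) = a i
      unfold prevC
      congr 1
      have hv : (i + 1 : Fin k).val = (i.val + 1) % k := by
        rw [Fin.val_add, h1v]
      apply Fin.ext
      show ((i + 1 : Fin k).val + (k - 1)) % k = i.val
      rw [hv, Nat.mod_add_mod]
      have he : i.val + 1 + (k - 1) = i.val + k := by omega
      rw [he, Nat.add_mod_right, Nat.mod_eq_of_lt i.isLt]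
    have h2 : ∑ i, (prevC a i + a i) ≤ ∑ _i : Fin k, n :=
      Finset.sum_le_sum fun i _ => ha i
    rw [Finset.sum_add_distrib, hperm, Finset.sum_const, Finset.card_univ,
      Fintype.card_fin, smul_eq_mul] at h2
    rw [Nat.le_div_iff_mul_le two_pos]
    have hc : k * n = n * k := Nat.mul_comm _ _
    omega
end

section
/- For k even, the tuples (a_1,...,a_k) of nonnegative integers satisfying a_{i-1}+a_i ≤ n cyclically (a_0 = a_k) with a_1+...+a_k = nk/2 are exactly those of the form (n-j, j, n-j, j, ..., n-j, j) for some 0 ≤ j ≤ n. -/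
private lemma pair_sum (f : ℕ → ℕ) (m : ℕ) :
    ∑ x ∈ Finset.range (2*m), f x = ∑ i ∈ Finset.range m, (f (2*i) + f (2*i+1)) := by
  induction m with
  | zero => simp
  | succ m ih =>
    have h2 : 2*(m+1) = (2*m+1)+1 := by ring
    rw [Finset.sum_range_succ, ← ih, h2, Finset.sum_range_succ, Finset.sum_range_succ]
    ring_nf

/-- For `k` even, the cyclic compositions summing to `nk/2` are exactly the alternating
tuples `(n-j, j, n-j, j, ..., n-j, j)` for some `0 ≤ j ≤ n`. -/
theorem circular_max_compositions_k_even (n k : ℕ) (hn : 0 < n) (hk : 0 < k)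
    (hke : Even k) (a : Fin k → ℕ) :
    ((∀ i, prevC a i + a i ≤ n) ∧ (∑ i, a i) = n * k / 2) ↔
      ∃ j ≤ n, ∀ i : Fin k, a i = if i.val % 2 = 0 then n - j else j := by
  obtain ⟨m, hm⟩ := hke
  have hk2 : k = 2*m := by omega
  have hm0 : 0 < m := by omega
  set b : ℕ → ℕ := fun x => a ⟨x % k, Nat.mod_lt _ hk⟩ with hb
  have hab : ∀ i : Fin k, a i = b i.val := by
    intro i
    simp only [hb]
    congr 1
    exact Fin.ext (by simp [Nat.mod_eq_of_lt i.isLt])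
  have hsum_eq : (∑ i, a i) = ∑ x ∈ Finset.range k, b x := by
    rw [← Fin.sum_univ_eq_sum_range]
    exact Finset.sum_congr rfl fun i _ => hab i
  have hnk : n * k / 2 = m * n := by
    have : n * k = (m*n) * 2 := by rw [hk2]; ring
    rw [this, Nat.mul_div_cancel _ (by norm_num)]
  constructor
  · rintro ⟨hle, hsum⟩
    have h1 : ∀ x, b x + b (x+1) ≤ n := by
      intro x
      have h := hle ⟨(x+1) % k, Nat.mod_lt _ hk⟩
      have hprev : prevC a ⟨(x+1) % k, Nat.mod_lt _ hk⟩ = b x := by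
        unfold prevC
        simp only [hb]
        congr 1
        apply Fin.ext
        show ((x+1) % k + (k-1)) % k = x % k
        rw [Nat.mod_add_mod]
        have e : x + 1 + (k-1) = x + k := by omega
        rw [e, Nat.add_mod_right]
      rw [hprev] at h
      have hai : a ⟨(x+1) % k, Nat.mod_lt _ hk⟩ = b (x+1) := rfl
      rw [hai] at h
      exact h
    have hsum' : ∑ i ∈ Finset.range m, (b (2*i) + b (2*i+1)) = ∑ i ∈ Finset.range m, n := by
      rw [← pair_sum, ← hk2, ← hsum_eq, hsum, hnk, Finset.sum_const, Finset.card_range,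
        smul_eq_mul]
    have hpair : ∀ i ∈ Finset.range m, b (2*i) + b (2*i+1) = n := by
      rw [← Finset.sum_eq_sum_iff_of_le (fun i _ => h1 (2*i))]
      exact hsum'
    have hpair' : ∀ i < m, b (2*i) + b (2*i+1) = n := fun i hi =>
      hpair i (Finset.mem_range.mpr hi)
    have hstep : ∀ i, i+1 < m → b (2*(i+1)) ≤ b (2*i) := by
      intro i hi
      have e1 := hpair' i (by omega)
      have e2 := h1 (2*i+1)
      have e3 : 2*(i+1) = 2*i+1+1 := by ring
      rw [e3]
      omega
    have hmono2 : ∀ d i, i + d < m → b (2*(i+d)) ≤ b (2*i) := by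
      intro d
      induction d with
      | zero => intro i _; simp
      | succ p ih =>
        intro i hi
        have : i + (p+1) = (i+p) + 1 := by ring
        rw [this]
        exact le_trans (hstep (i+p) (by omega)) (ih i (by omega))
    have hbk : b k = b 0 := by
      simp only [hb]
      congr 1
      exact Fin.ext (by simp)
    have hwrap : b 0 ≤ b (2*(m-1)) := by
      have e2 := h1 (2*(m-1)+1)
      have e3 : 2*(m-1)+1+1 = k := by omega
      rw [e3, hbk] at e2
      have e1 := hpair' (m-1) (by omega)
      omega
    have heq0 : ∀ i < m, b (2*i) = b 0 := by
      intro i hi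
      have h2 : b (2*(m-1)) ≤ b (2*i) := by
        have e : m - 1 = i + (m-1-i) := by omega
        rw [e]
        exact hmono2 (m-1-i) i (by omega)
      have h3 : b (2*i) ≤ b (2*0) := by
        have := hmono2 i 0 (by omega)
        rwa [Nat.zero_add] at this
      simp only [Nat.mul_zero] at h3
      omega
    have hcn : b 0 ≤ n := by
      have := hpair' 0 hm0
      simp only [Nat.mul_zero, Nat.zero_add] at this
      omega
    refine ⟨n - b 0, Nat.sub_le _ _, ?_⟩
    intro i
    rw [hab i]
    by_cases hpar : i.val % 2 = 0
    · obtain ⟨q, hq⟩ : ∃ q, i.val = 2*q := ⟨i.val/2, by omega⟩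
      have hqm : q < m := by have := i.isLt; omega
      rw [if_pos hpar, hq, heq0 q hqm]
      omega
    · obtain ⟨q, hq⟩ : ∃ q, i.val = 2*q+1 := ⟨i.val/2, by omega⟩
      have hqm : q < m := by have := i.isLt; omega
      have e1 := hpair' q hqm
      have e2 := heq0 q hqm
      rw [if_neg hpar, hq]
      omega
  · rintro ⟨j, hj, hf⟩
    constructor
    · intro i
      have hp2 : ((i.val + (k-1)) % k) % 2 ≠ i.val % 2 := by
        by_cases h0 : i.val = 0
        · have e : (i.val + (k-1)) % k = k - 1 := by
            rw [h0, Nat.zero_add, Nat.mod_eq_of_lt (by omega)]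
          rw [e, h0]
          omega
        · have e0 : i.val + (k-1) = (i.val - 1) + k := by omega
          have e : (i.val + (k-1)) % k = i.val - 1 := by
            rw [e0, Nat.add_mod_right, Nat.mod_eq_of_lt (by omega)]
          rw [e]
          omega
      unfold prevC
      rw [hf ⟨(i.val + (k-1)) % k, Nat.mod_lt _ i.pos⟩, hf i]
      simp only
      split_ifs with h1 h2 h2 <;> omega
    · rw [hsum_eq, hnk]
      have hbx : ∀ x ∈ Finset.range k, b x = if x % 2 = 0 then n - j else j := by
        intro x hx
        have hx' := Finset.mem_range.mp hx
        show a _ = _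
        rw [hf]
        simp [Nat.mod_eq_of_lt hx']
      rw [Finset.sum_congr rfl hbx, hk2,
        pair_sum (fun x => if x % 2 = 0 then n - j else j) m]
      have hterm : ∀ i ∈ Finset.range m,
          ((if (2*i) % 2 = 0 then n - j else j) + (if (2*i+1) % 2 = 0 then n - j else j)) = n := by
        intro i _
        rw [if_pos (by omega), if_neg (by omega)]
        omega
      rw [Finset.sum_congr rfl hterm, Finset.sum_const, Finset.card_range, smul_eq_mul]
end

section
/- For k odd and n even, the only tuple (a_1,...,a_k) of nonnegative integers satisfying a_{i-1}+a_i ≤ n cyclically (a_0 = a_k) with a_1+...+a_k = nk/2 is (n/2, n/2, ..., n/2). -/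
/-! The `k` cyclic pair sums `a_{i-1} + a_i` add up to `2 ∑ a_i = nk`, and each is at most `n`,
so each equals `n`. Then `a_{i+1} = a_{i-1}`, i.e. `a` is `2`-periodic on `ℤ/k`, and since `k` is
odd, `2` generates `ℤ/k`, so `a` is constant with `2 a_i = n`. -/

open Function

namespace Fin

variable {k : ℕ} [NeZero k] {α : Type*} {f : Fin k → α}

open Fin.NatCast Fin.CommRing in
theorem apply_eq_apply_zero_of_periodic_one (h : Periodic f 1) (i : Fin k) : f i = f 0 := by
  simpa [nsmul_eq_mul] using h.nsmul i.val 0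

open Fin.NatCast Fin.CommRing in
theorem periodic_one_of_periodic_two (hk : Odd k) (h : Periodic f 2) : Periodic f 1 := by
  obtain ⟨t, rfl⟩ := hk
  have hcast : ((2 * t + 1 : ℕ) : Fin (2 * t + 1)) = 0 := Fin.natCast_self _
  have : (t + 1) • (2 : Fin (2 * t + 1)) = 1 := by
    rw [nsmul_eq_mul]
    push_cast at hcast ⊢
    linear_combination hcast
  simpa [this] using h.nsmul (t + 1)

end Fin

theorem prevC_eq_sub_one {k : ℕ} [NeZero k] (a : Fin k → ℕ) (i : Fin k) :
    prevC a i = a (i - 1) := by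
  rw [prevC]
  congr 1
  ext
  rw [Fin.val_mk, Fin.val_sub]
  rcases (Nat.one_le_iff_ne_zero.mpr (NeZero.ne k)).eq_or_lt with rfl | hk
  · simp
  · rw [Fin.val_one', Nat.mod_eq_of_lt hk, add_comm]

theorem add_apply_add_eq_of_two_mul_sum_eq {G : Type*} [AddGroup G] [Fintype G] {a : G → ℕ}
    {c : G} {n : ℕ} (hle : ∀ x, a x + a (x + c) ≤ n)
    (hsum : 2 * ∑ x, a x = Fintype.card G * n) (x : G) : a x + a (x + c) = n := by
  have htotal : ∑ x, (a x + a (x + c)) = ∑ _x : G, n := by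
    have hshift : ∑ x, a (x + c) = ∑ x, a x := Equiv.sum_comp (Equiv.addRight c) a
    rw [Finset.sum_add_distrib, hshift, ← two_mul, hsum, Finset.sum_const, Finset.card_univ,
      smul_eq_mul]
  exact (Finset.sum_eq_sum_iff_of_le fun x _ => hle x).mp htotal x (Finset.mem_univ x)

theorem periodic_add_self_of_add_apply_add_eq {G M : Type*} [AddSemigroup G]
    [AddCancelCommMonoid M] {a : G → M} {c : G} {n : M} (h : ∀ x, a x + a (x + c) = n) :
    Periodic a (c + c) := fun x => by
  have := (h (x + c)).trans (h x).symm
  rw [add_comm (a x), add_assoc] at this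
  exact add_left_cancel this

theorem circular_max_compositions_k_odd_n_even_general (n k : ℕ)
    (hne : Even n) (hko : Odd k) (a : Fin k → ℕ) :
    ((∀ i, prevC a i + a i ≤ n) ∧ (∑ i, a i) = n * k / 2) ↔
      ∀ i : Fin k, a i = n / 2 := by
  have : NeZero k := ⟨hko.pos.ne'⟩
  have hhalf : 2 * (n / 2) = n := Nat.two_mul_div_two_of_even hne
  have hsum_iff : (∑ i, a i) = n * k / 2 ↔ 2 * ∑ i, a i = Fintype.card (Fin k) * n := by
    rw [eq_comm, Nat.div_eq_iff_eq_mul_left two_pos (hne.two_dvd.mul_right k), Fintype.card_fin,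
      mul_comm n, mul_comm _ 2, eq_comm]
  simp only [prevC_eq_sub_one, hsum_iff]
  constructor
  · rintro ⟨hle, hsum⟩
    have hpair : ∀ i : Fin k, a i + a (i + 1) = n :=
      add_apply_add_eq_of_two_mul_sum_eq (fun i => by simpa using hle (i + 1)) hsum
    have hperiodic : Periodic a 2 := by
      open Fin.NatCast Fin.CommRing in
      simpa only [one_add_one_eq_two] using periodic_add_self_of_add_apply_add_eq hpair
    have hconst := Fin.apply_eq_apply_zero_of_periodic_one (Fin.periodic_one_of_periodic_two hko hperiodic)
    have h0 := hpair 0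
    rw [hconst (0 + 1)] at h0
    intro i
    rw [hconst i]
    omega
  · intro h
    refine ⟨fun i => by rw [h, h, ← two_mul, hhalf], ?_⟩
    simp [h, mul_left_comm, hhalf]

/-- For `k` odd and `n` even, the only cyclic composition summing to `nk/2`
is the constant tuple `(n/2, ..., n/2)`. -/
theorem circular_max_compositions_k_odd_n_even (n k : ℕ) (hn : 0 < n)
    (hne : Even n) (hko : Odd k) (a : Fin k → ℕ) :
    ((∀ i, prevC a i + a i ≤ n) ∧ (∑ i, a i) = n * k / 2) ↔
      ∀ i : Fin k, a i = n / 2 :=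
  circular_max_compositions_k_odd_n_even_general n k hne hko a
end

section
/- For k odd with k ≥ 3 and n odd, the tuples (a_1,...,a_k) of nonnegative integers with a_{i-1}+a_i ≤ n cyclically (a_0 = a_k) and a_1+...+a_k = (nk-1)/2 are exactly those with every a_i ∈ {(n-1)/2, (n+1)/2} and no two cyclically adjacent entries both equal to (n+1)/2; there are exactly (k-1)/2 entries equal to (n+1)/2 in each such tuple. -/
/-! Write `n = 2m + 1` and `k = 2l + 1`. Deleting any entry `a i` from the odd cycle leaves a path
of `2l` entries, which splits into `l` adjacent pairs of sum at most `n`; so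
`(nk - 1)/2 ≤ a i + l n`, i.e. `m ≤ a i`, and then `a i ≤ n - a (i + 1) ≤ m + 1`. Two adjacent
entries `m + 1` would exceed `n`, and the number of entries `m + 1` is read off the sum. -/

open Finset Fin.NatCast

theorem sum_range_two_mul_le {M : Type*} [AddCommMonoid M] [PartialOrder M]
    [IsOrderedAddMonoid M] {g : ℕ → M} {c : M} (h : ∀ t, g t + g (t + 1) ≤ c) (l : ℕ) :
    ∑ t ∈ range (2 * l), g t ≤ l • c := by
  induction l with
  | zero => simp
  | succ l ih =>
    rw [mul_add_one, sum_range_succ, sum_range_succ, add_assoc, succ_nsmul]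
    exact add_le_add ih (h _)

theorem sum_eq_mul_add_card_filter {ι : Type*} [Fintype ι] {a : ι → ℕ} {m : ℕ}
    (h : ∀ i, a i = m ∨ a i = m + 1) :
    ∑ i, a i = Fintype.card ι * m + #{i | a i = m + 1} := by
  have split : ∀ i, a i = m + if a i = m + 1 then 1 else 0 := fun i => by
    rcases h i with hi | hi <;> simp [hi]
  rw [sum_congr rfl fun i _ => split i, sum_add_distrib, sum_const, card_univ, smul_eq_mul,
    sum_boole, Nat.cast_id]

section Cyclic

variable {k : ℕ} [NeZero k]

theorem Fin.sum_eq_sum_range_add {M : Type*} [AddCommMonoid M] (a : Fin k → M) (i : Fin k) :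
    ∑ x, a x = ∑ t ∈ range k, a (i + t) := by
  rw [← Fin.sum_univ_eq_sum_range (fun t => a (i + t))]
  simp only [Fin.cast_val_eq_self]
  exact (Equiv.sum_comp (Equiv.addLeft i) a).symm

theorem Fin.val_add_one_mod_eq_iff (i j : Fin k) : ((i : ℕ) + 1) % k = j ↔ i + 1 = j := by
  rw [Fin.ext_iff, Fin.val_add, Fin.val_one', Nat.add_mod_mod]

theorem prevC_add_one (a : Fin k → ℕ) (i : Fin k) : prevC a (i + 1) = a i := by
  unfold prevC
  congr 1
  ext
  show (((i + 1 : Fin k) : ℕ) + (k - 1)) % k = (i : ℕ)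
  rw [Fin.val_add, Fin.val_one', Nat.mod_add_mod]
  rcases Nat.lt_or_ge k 2 with hk | hk
  · obtain rfl : k = 1 := by have := NeZero.pos k; omega
    simp
  · rw [Nat.mod_eq_of_lt (by omega : 1 < k), show (i : ℕ) + 1 + (k - 1) = i + k by omega,
      Nat.add_mod_right, Nat.mod_eq_of_lt i.isLt]

theorem forall_prevC_add_le_iff {a : Fin k → ℕ} {n : ℕ} :
    (∀ i, prevC a i + a i ≤ n) ↔ ∀ i, a i + a (i + 1) ≤ n := by
  refine ⟨fun h i => prevC_add_one a i ▸ h (i + 1), fun h i => ?_⟩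
  have := h (i - 1)
  rwa [← prevC_add_one a (i - 1), sub_add_cancel] at this

end Cyclic

section OddCycle

variable {l : ℕ}

theorem sum_le_add_nsmul_of_add_succ_le {M : Type*} [AddCommMonoid M] [PartialOrder M]
    [IsOrderedAddMonoid M] {a : Fin (2 * l + 1) → M} {c : M} (h : ∀ x, a x + a (x + 1) ≤ c)
    (i : Fin (2 * l + 1)) : ∑ x, a x ≤ a i + l • c := by
  rw [Fin.sum_eq_sum_range_add a i, sum_range_succ', Nat.cast_zero, add_zero, add_comm]
  gcongr
  refine sum_range_two_mul_le (fun t => ?_) l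
  simpa only [Nat.cast_add, Nat.cast_one, add_assoc] using h (i + (t + 1 : ℕ))

theorem cyclic_max_compositions_iff {m : ℕ} (a : Fin (2 * l + 1) → ℕ) :
    ((∀ x, a x + a (x + 1) ≤ 2 * m + 1) ∧ ∑ x, a x = 2 * m * l + m + l) ↔
      ((∀ x, a x = m ∨ a x = m + 1) ∧ (∀ x, ¬(a x = m + 1 ∧ a (x + 1) = m + 1)) ∧
        #{x | a x = m + 1} = l) := by
  constructor
  · rintro ⟨hadj, hsum⟩
    have hlow : ∀ x, m ≤ a x := fun x => by
      have := sum_le_add_nsmul_of_add_succ_le hadj x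
      rw [hsum, smul_eq_mul] at this
      linarith
    have hval : ∀ x, a x = m ∨ a x = m + 1 := fun x => by
      have := hadj x; have := hlow x; have := hlow (x + 1); omega
    refine ⟨hval, fun x hx => by have := hadj x; omega, ?_⟩
    have := sum_eq_mul_add_card_filter hval
    rw [Fintype.card_fin, hsum] at this
    linarith
  · rintro ⟨hval, hnot, hcard⟩
    refine ⟨fun x => by have := hval x; have := hval (x + 1); have := hnot x; omega, ?_⟩
    rw [sum_eq_mul_add_card_filter hval, Fintype.card_fin, hcard]
    ring

end OddCycle

theorem circular_max_compositions_k_odd_n_odd_general (n k : ℕ)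
    (hko : Odd k) (hno : Odd n) (a : Fin k → ℕ) :
    ((∀ i, prevC a i + a i ≤ n) ∧ (∑ i, a i) = (n * k - 1) / 2) ↔
      ((∀ i, a i = (n - 1) / 2 ∨ a i = (n + 1) / 2) ∧
       (∀ i j : Fin k, ((i : ℕ) + 1) % k = (j : ℕ) →
          ¬(a i = (n + 1) / 2 ∧ a j = (n + 1) / 2)) ∧
       (Finset.univ.filter fun i : Fin k => a i = (n + 1) / 2).card = (k - 1) / 2) := by
  obtain ⟨m, rfl⟩ := hno
  obtain ⟨l, rfl⟩ := hko
  have hsum : ((2 * m + 1) * (2 * l + 1) - 1) / 2 = 2 * m * l + m + l := by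
    rw [show (2 * m + 1) * (2 * l + 1) = 2 * (2 * m * l + m + l) + 1 by ring]
    omega
  have hm : 2 * m / 2 = m := by omega
  have hm' : (2 * m + 1 + 1) / 2 = m + 1 := by omega
  have hl : 2 * l / 2 = l := by omega
  simp only [forall_prevC_add_le_iff, Fin.val_add_one_mod_eq_iff, forall_eq', hsum,
    Nat.add_sub_cancel, hm, hm', hl]
  exact cyclic_max_compositions_iff a

/-- For `k ≥ 3` odd and `n` odd, the cyclic compositions summing to `(nk-1)/2` are
exactly those with all entries in `{(n-1)/2, (n+1)/2}`, no two cyclically adjacent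
entries both `(n+1)/2`, and exactly `(k-1)/2` entries equal to `(n+1)/2`. -/
theorem circular_max_compositions_k_odd_n_odd (n k : ℕ) (hk : 3 ≤ k)
    (hko : Odd k) (hno : Odd n) (a : Fin k → ℕ) :
    ((∀ i, prevC a i + a i ≤ n) ∧ (∑ i, a i) = (n * k - 1) / 2) ↔
      ((∀ i, a i = (n - 1) / 2 ∨ a i = (n + 1) / 2) ∧
       (∀ i j : Fin k, ((i : ℕ) + 1) % k = (j : ℕ) →
          ¬(a i = (n + 1) / 2 ∧ a j = (n + 1) / 2)) ∧
       (Finset.univ.filter fun i : Fin k => a i = (n + 1) / 2).card = (k - 1) / 2) :=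
  circular_max_compositions_k_odd_n_odd_general n k hko hno a
end

section
/- For k odd, the tuples (a_1,...,a_k) of nonnegative integers satisfying a_1 ≤ n and a_{i-1}+a_i ≤ n for 2 ≤ i ≤ k (with a_0 = 0) that achieve the maximum sum n(k+1)/2 are exactly the single tuple (n, 0, n, 0, ..., 0, n). -/
/-! Pair the entries as `a_0 + (a_1 + a_2) + ⋯ + (a_{2m-1} + a_{2m})`: each group is at most `n`,
so the sum is at most `n (m + 1)`, and equality forces every group to be tight. Inductively
`a_{2j} = n`, hence `a_{2j+1} = 0` and then `a_{2j+2} = n`. -/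

open Finset

lemma forall_prevL_add_le_iff {n k : ℕ} (hk : 0 < k) {a : Fin k → ℕ} {b : ℕ → ℕ}
    (hab : ∀ i : Fin k, a i = b i) :
    (∀ i, prevL a i + a i ≤ n) ↔ b 0 ≤ n ∧ ∀ i, i + 1 < k → b i + b (i + 1) ≤ n := by
  constructor
  · intro h
    exact ⟨by simpa [prevL, hab] using h ⟨0, hk⟩,
      fun i hi => by simpa [prevL, hab] using h ⟨i + 1, hi⟩⟩
  · rintro ⟨h0, h⟩ ⟨_ | i, hi⟩
    · simpa [prevL, hab] using h0
    · simpa [prevL, hab] using h i hi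

section Alternating

variable {n m : ℕ} {b : ℕ → ℕ}

lemma sum_range_alternating (n m : ℕ) :
    ∑ i ∈ range (2 * m + 1), (if i % 2 = 0 then n else 0) = n * (m + 1) := by
  induction m with
  | zero => simp
  | succ m ih =>
    rw [show 2 * (m + 1) + 1 = 2 * m + 1 + 1 + 1 by ring, sum_range_succ, sum_range_succ, ih,
      if_neg (by omega), if_pos (by omega)]
    ring

lemma sum_range_le_of_adjacent_le (h0 : b 0 ≤ n) (hadj : ∀ i < 2 * m, b i + b (i + 1) ≤ n) :
    ∑ i ∈ range (2 * m + 1), b i ≤ n * (m + 1) := by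
  induction m with
  | zero => simpa using h0
  | succ m ih =>
    have hS := ih fun i hi => hadj i (by omega)
    have hlast := hadj (2 * m + 1) (by omega)
    rw [show 2 * (m + 1) + 1 = 2 * m + 1 + 1 + 1 by ring, sum_range_succ, sum_range_succ]
    nlinarith

lemma eq_alternating_of_sum_range_eq (h0 : b 0 ≤ n) (hadj : ∀ i < 2 * m, b i + b (i + 1) ≤ n)
    (hsum : ∑ i ∈ range (2 * m + 1), b i = n * (m + 1)) :
    ∀ i < 2 * m + 1, b i = if i % 2 = 0 then n else 0 := by
  induction m with
  | zero =>
    intro i hi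
    obtain rfl : i = 0 := by omega
    simpa using hsum
  | succ m ih =>
    have hadj' : ∀ i < 2 * m, b i + b (i + 1) ≤ n := fun i hi => hadj i (by omega)
    have hS := sum_range_le_of_adjacent_le h0 hadj'
    have hlast := hadj (2 * m + 1) (by omega)
    rw [show 2 * (m + 1) + 1 = 2 * m + 1 + 1 + 1 by ring, sum_range_succ, sum_range_succ] at hsum
    have hprefix := ih hadj' (by nlinarith)
    have hb2m : b (2 * m) = n := by simpa using hprefix (2 * m) (by omega)
    have hodd : b (2 * m + 1) = 0 := by have := hadj (2 * m) (by omega); omega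
    have heven : b (2 * m + 2) = n := by nlinarith
    intro i hi
    rcases (by omega : i < 2 * m + 1 ∨ i = 2 * m + 1 ∨ i = 2 * m + 2) with hi | rfl | rfl
    · exact hprefix i hi
    · simpa [Nat.add_mod] using hodd
    · simpa [Nat.add_mod] using heven

theorem adjacent_le_and_sum_eq_iff :
    (b 0 ≤ n ∧ (∀ i < 2 * m, b i + b (i + 1) ≤ n) ∧ ∑ i ∈ range (2 * m + 1), b i = n * (m + 1)) ↔
      ∀ i < 2 * m + 1, b i = if i % 2 = 0 then n else 0 := by
  refine ⟨fun ⟨h0, hadj, hsum⟩ => eq_alternating_of_sum_range_eq h0 hadj hsum, fun h => ?_⟩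
  refine ⟨by simp [h 0 (by omega)], fun i hi => ?_, ?_⟩
  · rw [h i (by omega), h (i + 1) (by omega)]
    rcases Nat.mod_two_eq_zero_or_one i with hpar | hpar <;> simp [hpar, Nat.succ_mod_two_eq_zero_iff]
  · rw [sum_congr rfl fun i hi => h i (mem_range.mp hi), sum_range_alternating]

end Alternating

theorem linear_max_compositions_k_odd_general (n k : ℕ) (hko : Odd k)
    (a : Fin k → ℕ) :
    ((∀ i, prevL a i + a i ≤ n) ∧ (∑ i, a i) = n * ((k + 1) / 2)) ↔
      ∀ i : Fin k, a i = if i.val % 2 = 0 then n else 0 := by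
  obtain ⟨m, rfl⟩ := hko
  set b : ℕ → ℕ := fun i => if h : i < 2 * m + 1 then a ⟨i, h⟩ else 0
  have hab : ∀ i : Fin (2 * m + 1), a i = b i := fun i => by simp only [b, dif_pos i.isLt]
  have hsum : ∑ i, a i = ∑ i ∈ range (2 * m + 1), b i := by
    simp_rw [hab]; exact Fin.sum_univ_eq_sum_range b _
  have halt : (∀ i : Fin (2 * m + 1), a i = if i.val % 2 = 0 then n else 0) ↔
      ∀ i < 2 * m + 1, b i = if i % 2 = 0 then n else 0 := by
    simp_rw [hab]; exact ⟨fun h i hi => h ⟨i, hi⟩, fun h i => h i i.isLt⟩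
  rw [forall_prevL_add_le_iff (by omega) hab, hsum, halt, show (2 * m + 1 + 1) / 2 = m + 1 by omega,
    ← adjacent_le_and_sum_eq_iff]
  simp only [Nat.add_lt_add_iff_right, and_assoc]

/-- For `k` odd, the only linear composition achieving the maximum sum `n(k+1)/2`
is `(n, 0, n, 0, ..., 0, n)`. -/
theorem linear_max_compositions_k_odd (n k : ℕ) (hn : 0 < n) (hko : Odd k)
    (a : Fin k → ℕ) :
    ((∀ i, prevL a i + a i ≤ n) ∧ (∑ i, a i) = n * ((k + 1) / 2)) ↔
      ∀ i : Fin k, a i = if i.val % 2 = 0 then n else 0 :=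
  linear_max_compositions_k_odd_general n k hko a
end

section
/- For k even, the tuples (a_1,...,a_k) of nonnegative integers satisfying a_1 ≤ n and a_{i-1}+a_i ≤ n for 2 ≤ i ≤ k (a_0 = 0) with a_1+...+a_k = nk/2 are exactly those of the form (n-j_1, j_1, n-j_2, j_2, ..., n-j_{k/2}, j_{k/2}) for some chain 0 ≤ j_1 ≤ j_2 ≤ ... ≤ j_{k/2} ≤ n. -/
lemma sum_pair_aux (f : ℕ → ℕ) (m : ℕ) :
    ∑ i ∈ Finset.range (2*m), f i = ∑ t ∈ Finset.range m, (f (2*t) + f (2*t+1)) := by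
  induction m with
  | zero => simp
  | succ m ih =>
    have h2 : 2 * (m+1) = (2*m + 1) + 1 := by ring
    rw [h2, Finset.sum_range_succ, Finset.sum_range_succ, ih, Finset.sum_range_succ]
    ring_nf

lemma all_eq_aux (g : ℕ → ℕ) (m n : ℕ) (hle : ∀ t < m, g t ≤ n)
    (hsum : ∑ t ∈ Finset.range m, g t = n * m) : ∀ t < m, g t = n := by
  by_contra hc
  push_neg at hc
  obtain ⟨t, ht, hne⟩ := hc
  have hlt : g t < n := lt_of_le_of_ne (hle t ht) hne
  have h := Finset.sum_lt_sum (f := g) (g := fun _ => n)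
    (fun i hi => hle i (Finset.mem_range.mp hi)) ⟨t, Finset.mem_range.mpr ht, hlt⟩
  simp [Finset.sum_const] at h
  rw [mul_comm] at hsum
  omega

lemma fin_cast_aux {k : ℕ} (a : Fin k → ℕ) {x y : ℕ} (hx : x < k) (hy : y < k)
    (h : x = y) : a ⟨x, hx⟩ = a ⟨y, hy⟩ := by subst h; rfl

/-- For `k` even, the linear compositions summing to `nk/2` are exactly those of the
form `(n-j_1, j_1, ..., n-j_{k/2}, j_{k/2})` for a weakly increasing chain
`0 ≤ j_1 ≤ ... ≤ j_{k/2} ≤ n`. -/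
theorem linear_max_compositions_k_even (n k : ℕ) (hn : 0 < n) (hk : 0 < k)
    (hk2 : 2 ∣ k) (a : Fin k → ℕ) :
    ((∀ i, prevL a i + a i ≤ n) ∧ (∑ i, a i) = n * k / 2) ↔
      ∃ j : Fin (k / 2) → ℕ, Monotone j ∧ (∀ ℓ, j ℓ ≤ n) ∧
        ∀ i : Fin k, a i =
          if i.val % 2 = 0 then
            n - j ⟨i.val / 2, Nat.div_lt_div_of_lt_of_dvd hk2 i.isLt⟩
          else j ⟨i.val / 2, Nat.div_lt_div_of_lt_of_dvd hk2 i.isLt⟩ := by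
  obtain ⟨m, hm⟩ := hk2
  have hm0 : 0 < m := by omega
  have hk2m : k / 2 = m := by omega
  set a' : ℕ → ℕ := fun i => if h : i < k then a ⟨i, h⟩ else 0 with ha'
  have ha'' : ∀ (x : ℕ) (hx : x < k), a' x = a ⟨x, hx⟩ := by
    intro x hx; simp [ha', hx]
  have hsum_a : (∑ i, a i) = ∑ i ∈ Finset.range k, a' i := by
    rw [← Fin.sum_univ_eq_sum_range a' k]
    exact (Finset.sum_congr rfl (fun i _ => (ha'' i.val i.isLt).trans rfl)).symm
  have hnk : n * k / 2 = n * m := by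
    have : n * k = 2 * (n * m) := by rw [hm]; ring
    omega
  constructor
  · rintro ⟨h1, h2⟩
    have hpairle : ∀ t < m, a' (2*t) + a' (2*t+1) ≤ n := by
      intro t ht
      have hi : 2*t+1 < k := by omega
      have h := h1 ⟨2*t+1, hi⟩
      rw [prevL] at h
      simp only [Fin.val_mk] at h
      rw [if_neg (by omega)] at h
      rw [ha'' (2*t) (by omega), ha'' (2*t+1) hi]
      rw [fin_cast_aux a (Nat.lt_of_le_of_lt (Nat.sub_le _ _) hi) (show 2*t < k by omega)
        (by omega : 2*t+1-1 = 2*t)] at h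
      exact h
    have hsum' : ∑ t ∈ Finset.range m, (a' (2*t) + a' (2*t+1)) = n * m := by
      rw [← sum_pair_aux a' m, ← hm, ← hsum_a, h2, hnk]
    have hpaireq : ∀ t < m, a' (2*t) + a' (2*t+1) = n :=
      all_eq_aux _ m n hpairle hsum'
    have hstep : ∀ t, t + 1 < m → a' (2*t+1) ≤ a' (2*(t+1)+1) := by
      intro t ht
      have hi : 2*t+2 < k := by omega
      have h := h1 ⟨2*t+2, hi⟩
      rw [prevL] at h
      simp only [Fin.val_mk] at h
      rw [if_neg (by omega)] at h
      rw [fin_cast_aux a _ (by omega : 2*t+1 < k) (by omega : 2*t+2-1 = 2*t+1)] at h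
      rw [← ha'' (2*t+1) (by omega), ← ha'' (2*t+2) hi] at h
      have he := hpaireq (t+1) (by omega)
      have e1 : 2*(t+1) = 2*t+2 := by ring
      rw [e1] at he
      have e2 : 2*(t+1)+1 = 2*t+2+1 := by ring
      rw [e2]
      omega
    have hmono' : ∀ d t, t + d < m → a' (2*t+1) ≤ a' (2*(t+d)+1) := by
      intro d
      induction d with
      | zero => intro t _; rfl
      | succ d ih =>
        intro t ht
        have h1' := ih t (by omega)
        have h2' := hstep (t+d) (by omega)
        have e1 : t + (d+1) = (t+d) + 1 := by ring
        rw [e1]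
        exact le_trans h1' h2'
    refine ⟨fun t => a' (2*t.val+1), ?_, ?_, ?_⟩
    · intro t t' htt
      have := hmono' (t'.val - t.val) t.val (by omega)
      simpa [Nat.add_sub_cancel' (show t.val ≤ t'.val from htt)] using this
    · intro ℓ
      have := hpaireq ℓ.val (by omega)
      show a' (2*ℓ.val+1) ≤ n
      omega
    · intro i
      have hi2 : i.val / 2 < m := by omega
      have he := hpaireq (i.val/2) hi2
      by_cases hpar : i.val % 2 = 0
      · rw [if_pos hpar]
        have hiv : i.val = 2*(i.val/2) := by omega
        have : a i = a' (2*(i.val/2)) := by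
          rw [ha'' (2*(i.val/2)) (by omega)]
          conv_lhs => rw [show i = ⟨i.val, i.isLt⟩ from rfl]
          exact fin_cast_aux a _ _ hiv
        rw [this]
        show a' (2*(i.val/2)) = n - a' (2*(i.val/2)+1)
        omega
      · rw [if_neg hpar]
        have hiv : i.val = 2*(i.val/2)+1 := by omega
        have : a i = a' (2*(i.val/2)+1) := by
          rw [ha'' (2*(i.val/2)+1) (by omega)]
          conv_lhs => rw [show i = ⟨i.val, i.isLt⟩ from rfl]
          exact fin_cast_aux a _ _ hiv
        rw [this]
  · rintro ⟨j, hmono, hbd, hform⟩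
    constructor
    · intro i
      rw [prevL]
      by_cases h0 : i.val = 0
      · rw [if_pos h0, hform i]
        have hpar : i.val % 2 = 0 := by omega
        rw [if_pos hpar]
        have := hbd ⟨i.val/2, by omega⟩
        omega
      · rw [if_neg h0]
        have hlt : i.val - 1 < k := by omega
        rw [hform ⟨i.val - 1, hlt⟩, hform i]
        simp only [Fin.val_mk]
        by_cases hpar : i.val % 2 = 0
        · rw [if_neg (by omega), if_pos hpar]
          have heq : (⟨(i.val-1)/2, by omega⟩ : Fin (k/2)) ≤ ⟨i.val/2, by omega⟩ := by
            simp only [Fin.mk_le_mk]; omega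
          have h1 := hmono heq
          have h2 := hbd (⟨i.val/2, by omega⟩ : Fin (k/2))
          have h3 := hbd (⟨(i.val-1)/2, by omega⟩ : Fin (k/2))
          omega
        · rw [if_pos (by omega), if_neg hpar]
          have heq : ((i.val-1)/2 : ℕ) = i.val/2 := by omega
          rw [fin_cast_aux j (by omega) (by omega) heq]
          have h2 := hbd (⟨i.val/2, by omega⟩ : Fin (k/2))
          omega
    · rw [hsum_a, hnk, hm, sum_pair_aux a' m]
      have hterm : ∀ t ∈ Finset.range m, a' (2*t) + a' (2*t+1) = n := by
        intro t ht
        rw [Finset.mem_range] at ht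
        have h1 : 2*t < k := by omega
        have h2 : 2*t+1 < k := by omega
        rw [ha'' (2*t) h1, ha'' (2*t+1) h2, hform ⟨2*t, h1⟩, hform ⟨2*t+1, h2⟩]
        simp only [Fin.val_mk]
        rw [if_pos (by omega), if_neg (by omega)]
        have e1 : (2*t)/2 = t := by omega
        have e2 : (2*t+1)/2 = t := by omega
        rw [fin_cast_aux j (by omega) (by omega) e1,
            fin_cast_aux j (by omega) (by omega) e2]
        have := hbd (⟨t, by omega⟩ : Fin (k/2))
        omega
      rw [Finset.sum_congr rfl hterm, Finset.sum_const, smul_eq_mul, mul_comm, Finset.card_range]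
end

section
/- For k odd, the number of maximum non-attacking rook placements on the linear chained board B^-_{n,k} is (n!)^((k+1)/2). -/
section Aux
variable {n k : ℕ} {R : Finset (Fin k × Fin n × Fin n)}

lemma card_rows (hR : LinNonAtt n k R) (i : Fin k) :
    ((R.filter (fun r => r.1 = i)).image (fun r => r.2.1)).card = bCount R i := by
  apply Finset.card_image_of_injOn
  intro x hx y hy hxy
  simp only [Finset.coe_filter, Set.mem_setOf_eq] at hx hy
  by_contra hne
  exact (hR.1 x hx.1 y hy.1 hne (hx.2.trans hy.2.symm)).1 hxy

lemma card_cols (hR : LinNonAtt n k R) (i : Fin k) :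
    ((R.filter (fun r => r.1 = i)).image (fun r => r.2.2)).card = bCount R i := by
  apply Finset.card_image_of_injOn
  intro x hx y hy hxy
  simp only [Finset.coe_filter, Set.mem_setOf_eq] at hx hy
  by_contra hne
  exact (hR.1 x hx.1 y hy.1 hne (hx.2.trans hy.2.symm)).2 hxy

lemma bCount_le (hR : LinNonAtt n k R) (i : Fin k) : bCount R i ≤ n := by
  calc bCount R i = ((R.filter (fun r => r.1 = i)).image (fun r => r.2.1)).card :=
        (card_rows hR i).symm
    _ ≤ Fintype.card (Fin n) := Finset.card_le_univ _
    _ = n := Fintype.card_fin n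

lemma pair_le (hR : LinNonAtt n k R) {i i' : Fin k} (h : (i : ℕ) + 1 = (i' : ℕ)) :
    bCount R i + bCount R i' ≤ n := by
  classical
  have hd : Disjoint ((R.filter (fun r => r.1 = i)).image (fun r => r.2.1))
      ((R.filter (fun r => r.1 = i')).image (fun r => r.2.2)) := by
    rw [Finset.disjoint_left]
    intro a ha hb
    obtain ⟨x, hx, hxa⟩ := Finset.mem_image.mp ha
    obtain ⟨y, hy, hya⟩ := Finset.mem_image.mp hb
    simp only [Finset.mem_filter] at hx hy
    exact hR.2 x hx.1 y hy.1 (by rw [hx.2, hy.2]; exact h) (hxa.trans hya.symm)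
  calc bCount R i + bCount R i'
      = (((R.filter (fun r => r.1 = i)).image (fun r => r.2.1)) ∪
         ((R.filter (fun r => r.1 = i')).image (fun r => r.2.2))).card := by
        rw [Finset.card_union_of_disjoint hd, card_rows hR, card_cols hR]
    _ ≤ Fintype.card (Fin n) := Finset.card_le_univ _
    _ = n := Fintype.card_fin n

lemma rows_full (hR : LinNonAtt n k R) {i : Fin k} (hn : bCount R i = n) (r : Fin n) :
    ∃ x, x ∈ R ∧ x.1 = i ∧ x.2.1 = r := by
  have hA : ((R.filter (fun r => r.1 = i)).image (fun r => r.2.1)) = Finset.univ :=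
    Finset.eq_univ_of_card _ (by rw [card_rows hR, hn, Fintype.card_fin])
  have : r ∈ ((R.filter (fun r => r.1 = i)).image (fun r => r.2.1)) := by
    rw [hA]; exact Finset.mem_univ _
  obtain ⟨x, hx, hxr⟩ := Finset.mem_image.mp this
  simp only [Finset.mem_filter] at hx
  exact ⟨x, hx.1, hx.2, hxr⟩

lemma next_zero (hR : LinNonAtt n k R) {i i' : Fin k} (h : (i : ℕ) + 1 = (i' : ℕ))
    (hn : bCount R i = n) : bCount R i' = 0 := by
  rw [bCount, Finset.card_eq_zero]
  ext y
  simp only [Finset.mem_filter, Finset.notMem_empty, iff_false, not_and]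
  intro hyR hyi
  obtain ⟨x, hxR, hxi, hxr⟩ := rows_full hR hn y.2.2
  exact absurd hxr (hR.2 x hxR y hyR (by rw [hxi, hyi]; exact h))

lemma sum_bCount (R : Finset (Fin k × Fin n × Fin n)) :
    ∑ i : Fin k, bCount R i = R.card :=
  (Finset.card_eq_sum_card_fiberwise (fun x _ => Finset.mem_univ x.1)).symm

end Aux

lemma sum_pairing (c : ℕ → ℕ) (J : ℕ) :
    ∑ i ∈ Finset.range (2*J+1), c i
      = ∑ t ∈ Finset.range (J+1), (if t = 0 then c 0 else c (2*t-1) + c (2*t)) := by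
  induction J with
  | zero => simp
  | succ J ih =>
    have h2 : 2*(J+1)+1 = (2*J+1)+1+1 := by ring
    rw [h2, Finset.sum_range_succ, Finset.sum_range_succ, ih,
      Finset.sum_range_succ (n := J+1)]
    have h3 : (if J+1 = 0 then c 0 else c (2*(J+1)-1) + c (2*(J+1)))
        = c (2*J+1) + c (2*J+1+1) := by
      rw [if_neg (Nat.succ_ne_zero J)]
      congr 2
    rw [h3]
    ring

def lboard {j : ℕ} (t : Fin (j+1)) : Fin (2*j+1) := ⟨2*t.val, by omega⟩

def mkR (n j : ℕ) (f : Fin (j+1) → Equiv.Perm (Fin n)) :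
    Finset (Fin (2*j+1) × Fin n × Fin n) :=
  Finset.univ.image (fun p : Fin (j+1) × Fin n => (lboard p.1, p.2, f p.1 p.2))

lemma mk_inj (n j : ℕ) (f : Fin (j+1) → Equiv.Perm (Fin n)) :
    Function.Injective (fun p : Fin (j+1) × Fin n => (lboard p.1, p.2, f p.1 p.2)) := by
  intro p q h
  simp only [Prod.mk.injEq] at h
  have hb : p.1 = q.1 := by
    have := congrArg Fin.val h.1
    simp only [lboard] at this
    exact Fin.ext (by omega)
  exact Prod.ext hb h.2.1

lemma mkR_card (n j : ℕ) (f : Fin (j+1) → Equiv.Perm (Fin n)) :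
    (mkR n j f).card = (j+1) * n := by
  rw [mkR, Finset.card_image_of_injective _ (mk_inj n j f), Finset.card_univ,
    Fintype.card_prod, Fintype.card_fin, Fintype.card_fin]

lemma mkR_nonatt (n j : ℕ) (f : Fin (j+1) → Equiv.Perm (Fin n)) :
    LinNonAtt n (2*j+1) (mkR n j f) := by
  constructor
  · intro r hr s hs hne hb
    obtain ⟨p, -, rfl⟩ := Finset.mem_image.mp hr
    obtain ⟨q, -, rfl⟩ := Finset.mem_image.mp hs
    have hpq : p.1 = q.1 := by
      have := congrArg Fin.val hb
      simp only [lboard] at this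
      exact Fin.ext (by omega)
    have hp2 : p.2 ≠ q.2 := by
      intro h
      exact hne (by rw [Prod.ext hpq h])
    refine ⟨hp2, ?_⟩
    rw [hpq]
    exact fun h => hp2 ((f q.1).injective h)
  · intro r hr s hs h
    obtain ⟨p, -, rfl⟩ := Finset.mem_image.mp hr
    obtain ⟨q, -, rfl⟩ := Finset.mem_image.mp hs
    simp only [lboard] at h
    omega

lemma mkR_injective (n j : ℕ) : Function.Injective (mkR n j) := by
  intro f g h
  funext t
  ext r
  have hm : (lboard t, r, f t r) ∈ mkR n j g := by
    rw [← h]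
    exact Finset.mem_image.mpr ⟨(t, r), Finset.mem_univ _, rfl⟩
  obtain ⟨p, -, hp⟩ := Finset.mem_image.mp hm
  simp only [Prod.mk.injEq] at hp
  have hb : p.1 = t := by
    have := congrArg Fin.val hp.1
    simp only [lboard] at this
    exact Fin.ext (by omega)
  rw [← hp.2.2, ← hp.2.1, hb]

/-- For `k` odd, the number of maximum rook placements on the linear chained board
is `(n!)^((k+1)/2)`. -/
theorem linear_max_count_k_odd (n k : ℕ) (hko : Odd k) :
    Nat.card {R : Finset (Fin k × Fin n × Fin n) //
        LinNonAtt n k R ∧ R.card = n * ((k + 1) / 2)} =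
      (Nat.factorial n) ^ ((k + 1) / 2) := by
  classical
  obtain ⟨j, hj⟩ := hko
  have hk : k = 2*j+1 := by omega
  subst hk
  have hexp : (2*j+1+1)/2 = j+1 := by omega
  rw [hexp]
  have hbij : Function.Bijective (fun f : Fin (j+1) → Equiv.Perm (Fin n) =>
      (⟨mkR n j f, mkR_nonatt n j f, by rw [mkR_card]; ring⟩ :
        {R : Finset (Fin (2*j+1) × Fin n × Fin n) //
          LinNonAtt n (2*j+1) R ∧ R.card = n * (j+1)})) := by
    constructor
    · intro f g h
      exact mkR_injective n j (congrArg Subtype.val h)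
    · rintro ⟨R, hR, hcard⟩
      set c : ℕ → ℕ := fun i => if h : i < 2*j+1 then bCount R ⟨i, h⟩ else 0 with hcdef
      have hcv : ∀ (i : ℕ) (h : i < 2*j+1), c i = bCount R ⟨i, h⟩ := fun i h => dif_pos h
      have hsum : ∑ i ∈ Finset.range (2*j+1), c i = n * (j+1) := by
        rw [← Fin.sum_univ_eq_sum_range]
        calc ∑ i : Fin (2*j+1), c i.val = ∑ i : Fin (2*j+1), bCount R i :=
              Finset.sum_congr rfl (fun i _ => hcv i.val i.isLt)
          _ = R.card := sum_bCount R
          _ = n * (j+1) := hcard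
      have hpsum : ∑ t ∈ Finset.range (j+1),
          (if t = 0 then c 0 else c (2*t-1) + c (2*t)) = n * (j+1) := by
        rw [← sum_pairing]; exact hsum
      have hle : ∀ t ∈ Finset.range (j+1),
          (if t = 0 then c 0 else c (2*t-1) + c (2*t)) ≤ n := by
        intro t ht
        rw [Finset.mem_range] at ht
        by_cases h0 : t = 0
        · subst h0
          rw [if_pos rfl, hcv 0 (by omega)]
          exact bCount_le hR _
        · rw [if_neg h0, hcv (2*t-1) (by omega), hcv (2*t) (by omega)]
          exact pair_le hR (show 2*t-1+1 = 2*t by omega)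
      have heach : ∀ t ∈ Finset.range (j+1),
          (if t = 0 then c 0 else c (2*t-1) + c (2*t)) = n := by
        rw [← Finset.sum_eq_sum_iff_of_le hle]
        rw [hpsum, Finset.sum_const, Finset.card_range, smul_eq_mul, Nat.mul_comm]
      have hc0 : c 0 = n := by simpa using heach 0 (by simp)
      have hpair : ∀ t, 1 ≤ t → t < j+1 → c (2*t-1) + c (2*t) = n := by
        intro t h1 h2
        have := heach t (Finset.mem_range.mpr h2)
        rwa [if_neg (by omega)] at this
      have heven : ∀ t, t < j+1 → c (2*t) = n := by
        intro t
        induction t with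
        | zero => intro _; simpa using hc0
        | succ t ih =>
          intro h
          have h1 : c (2*t) = n := ih (by omega)
          have h0 : c (2*t+1) = 0 := by
            rw [hcv (2*t+1) (by omega)]
            refine next_zero hR (i := ⟨2*t, by omega⟩) (show 2*t+1 = 2*t+1 from rfl) ?_
            rw [← hcv (2*t) (by omega)]
            exact h1
          have h2 := hpair (t+1) (by omega) h
          have he : 2*(t+1)-1 = 2*t+1 := by omega
          rw [he, h0] at h2
          simpa using h2
      have hex : ∀ (t : Fin (j+1)) (r : Fin n),
          ∃ x, x ∈ R ∧ x.1 = lboard t ∧ x.2.1 = r := by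
        intro t r
        apply rows_full hR
        rw [show (lboard t : Fin (2*j+1)) = ⟨2*t.val, by omega⟩ from rfl,
          ← hcv (2*t.val) (by omega)]
        exact heven t.val t.isLt
      choose g hg1 hg2 hg3 using hex
      have hinj : ∀ t : Fin (j+1), Function.Injective (fun r => (g t r).2.2) := by
        intro t r r' h
        by_cases hgr : g t r = g t r'
        · rw [← hg3 t r, ← hg3 t r', hgr]
        · exact absurd h
            ((hR.1 _ (hg1 t r) _ (hg1 t r') hgr ((hg2 t r).trans (hg2 t r').symm)).2)
      refine ⟨fun t => Equiv.ofBijective _ (Finite.injective_iff_bijective.mp (hinj t)),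
        Subtype.ext ?_⟩
      show mkR n j (fun t =>
        Equiv.ofBijective _ (Finite.injective_iff_bijective.mp (hinj t))) = R
      have hsub : mkR n j (fun t =>
          Equiv.ofBijective _ (Finite.injective_iff_bijective.mp (hinj t))) ⊆ R := by
        intro x hx
        obtain ⟨p, -, rfl⟩ := Finset.mem_image.mp hx
        have hxg : (lboard p.1, p.2,
            (Equiv.ofBijective _ (Finite.injective_iff_bijective.mp (hinj p.1))) p.2)
            = g p.1 p.2 :=
          Prod.ext (hg2 p.1 p.2).symm (Prod.ext (hg3 p.1 p.2).symm rfl)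
        rw [hxg]
        exact hg1 p.1 p.2
      apply Finset.eq_of_subset_of_card_le hsub
      rw [hcard, mkR_card]
      exact le_of_eq (by ring)
  rw [← Nat.card_eq_of_bijective _ hbij, Nat.card_eq_fintype_card, Fintype.card_fun,
    Fintype.card_perm, Fintype.card_fin, Fintype.card_fin]
end

section
/- For k even, the number of maximum non-attacking rook placements on the circular chained board B^∘_{n,k} equals (n!)^(k/2) · Σ_{j=0}^{n} C(n,j)^(k/2). -/
namespace CMCaux

open Finset

variable {n k : ℕ}

open Finset
variable {n k : ℕ}

def bRows (R : Finset (Fin k × Fin n × Fin n)) (i : Fin k) : Finset (Fin n) :=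
  (R.filter fun r => r.1 = i).image fun r => r.2.1

def DT (n k : ℕ) [NeZero k] : Type :=
  Σ A : Fin k → Finset (Fin n), ∀ i : Fin k, (↥((A i)ᶜ)) ≃ (↥(A (i + 1)))

def fromD [NeZero k] (d : DT n k) : Finset (Fin k × Fin n × Fin n) :=
  Finset.univ.image fun p : Σ i : Fin k, {x // x ∈ (d.1 i)ᶜ} =>
    (p.1 + 1, ((d.2 p.1 p.2 : {x // x ∈ d.1 (p.1 + 1)}) : Fin n), (p.2 : Fin n))

lemma mem_fromD [NeZero k] {d : DT n k} {r : Fin k × Fin n × Fin n} :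
    r ∈ fromD d ↔ ∃ (i : Fin k) (x : {x // x ∈ (d.1 i)ᶜ}),
      r = (i + 1, ((d.2 i x : {x // x ∈ d.1 (i + 1)}) : Fin n), (x : Fin n)) := by
  constructor
  · intro h
    obtain ⟨p, -, hp⟩ := Finset.mem_image.1 h
    exact ⟨p.1, p.2, hp.symm⟩
  · rintro ⟨i, x, rfl⟩
    exact Finset.mem_image.2 ⟨⟨i, x⟩, Finset.mem_univ _, rfl⟩

lemma val_one_of_two_le [NeZero k] (h2 : 2 ≤ k) : ((1 : Fin k) : ℕ) = 1 := by
  simp [Fin.val_one', Nat.mod_eq_of_lt h2]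

lemma val_add_one [NeZero k] (h2 : 2 ≤ k) (i : Fin k) :
    ((i + 1 : Fin k) : ℕ) = ((i : ℕ) + 1) % k := by
  rw [Fin.add_def, val_one_of_two_le h2]

lemma succ_iff [NeZero k] (h2 : 2 ≤ k) {i j : Fin k} :
    ((i : ℕ) + 1) % k = (j : ℕ) ↔ j = i + 1 := by
  rw [Fin.ext_iff, val_add_one h2]
  exact eq_comm

-- new part
lemma fromD_nonatt [NeZero k] (h2 : 2 ≤ k) (d : DT n k) : CircNonAtt n k (fromD d) := by
  constructor
  · intro r hr s hs hne h1
    obtain ⟨i, x, rfl⟩ := mem_fromD.1 hr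
    obtain ⟨i', x', rfl⟩ := mem_fromD.1 hs
    have hii : i = i' := by simpa using add_right_cancel (show i + 1 = i' + 1 from h1)
    subst hii
    have hxx : x ≠ x' := by
      rintro rfl; exact hne rfl
    constructor
    · simp only [ne_eq]
      intro hrow
      exact hxx (((d.2 i).injective (Subtype.ext hrow)))
    · simp only [ne_eq]
      intro hcol
      exact hxx (Subtype.ext hcol)
  · intro r hr s hs hsucc
    obtain ⟨i, x, rfl⟩ := mem_fromD.1 hr
    obtain ⟨i', x', rfl⟩ := mem_fromD.1 hs
    have h1 : i' + 1 = (i + 1) + 1 := (succ_iff h2).1 hsucc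
    have hii : i' = i + 1 := add_right_cancel h1
    subst hii
    simp only [ne_eq]
    intro heq
    have hx' := x'.2
    rw [Finset.mem_compl] at hx'
    exact hx' (heq ▸ (d.2 i x).2)


lemma card_rel [NeZero k] (d : DT n k) (i : Fin k) :
    n - (d.1 i).card = (d.1 (i + 1)).card := by
  have h1 : ((d.1 i)ᶜ).card = (d.1 (i + 1)).card :=
    (Fintype.card_coe _).symm.trans ((Fintype.card_congr (d.2 i)).trans (Fintype.card_coe _))
  rw [Finset.card_compl, Fintype.card_fin] at h1
  exact h1

lemma card_le (s : Finset (Fin n)) : s.card ≤ n := by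
  simpa using Finset.card_le_card (Finset.subset_univ s)

lemma card_rel' [NeZero k] (d : DT n k) (i : Fin k) :
    (d.1 i).card + (d.1 (i + 1)).card = n := by
  have := card_rel d i
  have h2 := card_le (n := n) (d.1 i)
  omega

lemma card_fromD [NeZero k] (d : DT n k) : (fromD d).card = n * k / 2 := by
  classical
  have hinj : Function.Injective
      (fun p : Σ i : Fin k, {x // x ∈ (d.1 i)ᶜ} =>
        (p.1 + 1, ((d.2 p.1 p.2 : {x // x ∈ d.1 (p.1 + 1)}) : Fin n), (p.2 : Fin n))) := by
    rintro ⟨i, x⟩ ⟨j, y⟩ h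
    simp only [Prod.mk.injEq] at h
    have hij : i = j := add_right_cancel h.1
    subst hij
    exact congrArg (Sigma.mk i) (Subtype.ext h.2.2)
  have hc : (fromD d).card = Fintype.card (Σ i : Fin k, {x // x ∈ (d.1 i)ᶜ}) := by
    rw [fromD, Finset.card_image_of_injective _ hinj, Finset.card_univ]
  rw [hc, Fintype.card_sigma]
  have he : ∀ i : Fin k, Fintype.card {x // x ∈ (d.1 i)ᶜ} = (d.1 (i+1)).card := fun i =>
    (Fintype.card_congr (d.2 i)).trans (Fintype.card_coe _)
  simp only [he]
  have hre : (∑ i : Fin k, (d.1 (i+1)).card) = ∑ i : Fin k, (d.1 i).card :=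
    Equiv.sum_comp (Equiv.addRight (1 : Fin k)) (fun i => (d.1 i).card)
  have hdouble : (∑ i : Fin k, (d.1 i).card) + (∑ i : Fin k, (d.1 i).card) = n * k := by
    have h1 : ∀ i : Fin k, (d.1 (i+1)).card + (d.1 i).card = n := by
      intro i; have := card_rel' d i; omega
    calc (∑ i : Fin k, (d.1 i).card) + (∑ i : Fin k, (d.1 i).card)
        = (∑ i : Fin k, (d.1 (i+1)).card) + ∑ i : Fin k, (d.1 i).card := by rw [hre]
      _ = ∑ i : Fin k, ((d.1 (i+1)).card + (d.1 i).card) := (Finset.sum_add_distrib).symm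
      _ = ∑ _i : Fin k, n := Finset.sum_congr rfl (fun i _ => h1 i)
      _ = n * k := by simp [mul_comm]
  rw [hre]
  omega

lemma bRows_fromD [NeZero k] (d : DT n k) (j : Fin k) :
    bRows (fromD d) j = d.1 j := by
  classical
  ext y
  simp only [bRows, Finset.mem_image, Finset.mem_filter]
  constructor
  · rintro ⟨r, ⟨hr, h1⟩, h2⟩
    obtain ⟨i, x, rfl⟩ := mem_fromD.1 hr
    simp only at h1 h2
    subst h1
    rw [← h2]
    exact (d.2 i x).2
  · intro hy
    set i := j - 1 with hi
    have hij : i + 1 = j := sub_add_cancel j 1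
    have hy' : y ∈ d.1 (i + 1) := by rw [hij]; exact hy
    obtain ⟨x, hx⟩ := (d.2 i).surjective ⟨y, hy'⟩
    refine ⟨(i + 1, ((d.2 i x : {x // x ∈ d.1 (i + 1)}) : Fin n), (x : Fin n)), ⟨?_, by simp [hij]⟩, ?_⟩
    · exact mem_fromD.2 ⟨i, x, rfl⟩
    · simp [hx]

lemma fromD_injective [NeZero k] : Function.Injective (fromD (n := n) (k := k)) := by
  classical
  rintro ⟨A, f⟩ ⟨A', f'⟩ h
  have hA : A = A' := by
    funext j
    have h1 : bRows (fromD ⟨A, f⟩) j = A j := bRows_fromD ⟨A, f⟩ j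
    have h2 : bRows (fromD ⟨A', f'⟩) j = A' j := bRows_fromD ⟨A', f'⟩ j
    rw [← h1, ← h2, h]
  subst hA
  refine congrArg (Sigma.mk A) ?_
  funext i
  apply Equiv.ext
  intro x
  have hmem : ((i + 1 : Fin k), ((f i x : {z // z ∈ A (i + 1)}) : Fin n), (x : Fin n)) ∈ fromD ⟨A, f'⟩ := by
    rw [← h]
    exact mem_fromD.2 ⟨i, x, rfl⟩
  obtain ⟨i', x', heq⟩ := mem_fromD.1 hmem
  simp only [Prod.mk.injEq] at heq
  have hii : i = i' := add_right_cancel heq.1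
  subst hii
  have hxx : x = x' := Subtype.ext heq.2.2
  subst hxx
  exact Subtype.ext heq.2.1


lemma eq_of_same_row {R : Finset (Fin k × Fin n × Fin n)} (hR : CircNonAtt n k R)
    {r s : Fin k × Fin n × Fin n} (hr : r ∈ R) (hs : s ∈ R) (h1 : r.1 = s.1)
    (h : r.2.1 = s.2.1) : r = s := by
  by_contra hne
  exact (hR.1 r hr s hs hne h1).1 h

lemma eq_of_same_col {R : Finset (Fin k × Fin n × Fin n)} (hR : CircNonAtt n k R)
    {r s : Fin k × Fin n × Fin n} (hr : r ∈ R) (hs : s ∈ R) (h1 : r.1 = s.1)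
    (h : r.2.2 = s.2.2) : r = s := by
  by_contra hne
  exact (hR.1 r hr s hs hne h1).2 h

lemma saturation [NeZero k] (h2 : 2 ≤ k) {R : Finset (Fin k × Fin n × Fin n)}
    (hR : CircNonAtt n k R) (hcard : 2 * R.card = n * k) (i : Fin k) (x : Fin n) :
    (∃ r ∈ R, r.1 = i ∧ r.2.1 = x) ∨ (∃ r ∈ R, r.1 = i + 1 ∧ r.2.2 = x) := by
  classical
  set E : (Fin k × Fin n × Fin n) × Bool → Fin k × Fin n :=
    fun p => if p.2 then (p.1.1 - 1, p.1.2.2) else (p.1.1, p.1.2.1) with hE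
  have hinj : Set.InjOn E ↑(R ×ˢ (Finset.univ : Finset Bool)) := by
    rintro ⟨r, b⟩ hp ⟨s, c⟩ hq h
    rw [Finset.mem_coe, Finset.mem_product] at hp hq
    have hrR : r ∈ R := hp.1
    have hsR : s ∈ R := hq.1
    match b, c with
    | false, false =>
      simp only [hE, if_neg Bool.false_ne_true, Prod.mk.injEq] at h
      have : r = s := eq_of_same_row hR hrR hsR h.1 h.2
      rw [this]
    | true, true =>
      simp only [hE, if_pos rfl, Prod.mk.injEq] at h
      have h1 : r.1 = s.1 := by
        have := h.1
        exact sub_left_injective this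
      have : r = s := eq_of_same_col hR hrR hsR h1 h.2
      rw [this]
    | false, true =>
      simp only [hE, if_neg Bool.false_ne_true, if_pos rfl, Prod.mk.injEq] at h
      exfalso
      have hs1 : s.1 = r.1 + 1 := (eq_sub_iff_add_eq.1 h.1).symm
      exact hR.2 r hrR s hsR ((succ_iff h2).2 hs1) h.2
    | true, false =>
      simp only [hE, if_neg Bool.false_ne_true, if_pos rfl, Prod.mk.injEq] at h
      exfalso
      have hr1 : r.1 = s.1 + 1 := sub_eq_iff_eq_add.1 h.1
      exact hR.2 s hsR r hrR ((succ_iff h2).2 hr1) h.2.symm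
  have hcard2 : ((R ×ˢ (Finset.univ : Finset Bool)).image E).card = n * k := by
    rw [Finset.card_image_of_injOn hinj, Finset.card_product]
    simp only [Finset.card_univ, Fintype.card_bool]
    omega
  have huniv : (R ×ˢ (Finset.univ : Finset Bool)).image E = Finset.univ := by
    apply Finset.eq_univ_of_card
    rw [hcard2]
    simp [mul_comm]
  have hmem : (i, x) ∈ (R ×ˢ (Finset.univ : Finset Bool)).image E := by
    rw [huniv]; exact Finset.mem_univ _
  obtain ⟨⟨r, b⟩, hp, hpe⟩ := Finset.mem_image.1 hmem
  simp only [Finset.mem_product] at hp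
  match b with
  | false =>
    left
    simp only [hE, if_neg Bool.false_ne_true, Prod.mk.injEq] at hpe
    exact ⟨r, hp.1, hpe.1, hpe.2⟩
  | true =>
    right
    simp only [hE, if_pos rfl, Prod.mk.injEq] at hpe
    exact ⟨r, hp.1, sub_eq_iff_eq_add.1 hpe.1, hpe.2⟩


lemma fromD_surj [NeZero k] (h2 : 2 ≤ k) {R : Finset (Fin k × Fin n × Fin n)}
    (hR : CircNonAtt n k R) (hcard : 2 * R.card = n * k) :
    ∃ d : DT n k, fromD d = R := by
  classical
  set A : Fin k → Finset (Fin n) := bRows R with hA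
  have hcompl : ∀ (r : Fin k × Fin n × Fin n), r ∈ R → r.2.2 ∉ A (r.1 - 1) := by
    intro r hr hx
    obtain ⟨s, hs, hs2⟩ := Finset.mem_image.1 hx
    rw [Finset.mem_filter] at hs
    have hsucc : r.1 = (r.1 - 1) + 1 := (sub_add_cancel r.1 1).symm
    refine hR.2 s hs.1 r hr ((succ_iff h2).2 ?_) ?_
    · rw [← hs.2] at hsucc
      exact hsucc
    · exact hs2
  have exu : ∀ (i : Fin k) (x : Fin n), x ∉ A i →
      ∃! r, r ∈ R ∧ (r.1 = i + 1 ∧ r.2.2 = x) := by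
    intro i x hx
    have hsat := saturation h2 hR hcard i x
    have hex : ∃ r ∈ R, r.1 = i + 1 ∧ r.2.2 = x := by
      rcases hsat with ⟨r, hr, h1, h2'⟩ | h
      · exact absurd (Finset.mem_image.2 ⟨r, Finset.mem_filter.2 ⟨hr, h1⟩, h2'⟩) hx
      · exact h
    obtain ⟨r, hr, hprop⟩ := hex
    refine ⟨r, ⟨hr, hprop⟩, ?_⟩
    rintro s ⟨hs, hsp⟩
    exact eq_of_same_col hR hs hr (hsp.1.trans hprop.1.symm) (hsp.2.trans hprop.2.symm)
  -- the chosen rook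
  have hxmem : ∀ (i : Fin k) (x : {x // x ∈ (A i)ᶜ}), (x : Fin n) ∉ A i :=
    fun i x => Finset.mem_compl.1 x.2
  set g : ∀ (i : Fin k), {x // x ∈ (A i)ᶜ} → (Fin k × Fin n × Fin n) :=
    fun i x => R.choose (fun r => r.1 = i + 1 ∧ r.2.2 = (x : Fin n)) (exu i x (hxmem i x)) with hg
  have hgR : ∀ i x, g i x ∈ R := fun i x => Finset.choose_mem _ _ _
  have hgp : ∀ i x, (g i x).1 = i + 1 ∧ (g i x).2.2 = (x : Fin n) :=
    fun i x => Finset.choose_property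
      (fun r : Fin k × Fin n × Fin n => r.1 = i + 1 ∧ r.2.2 = (x : Fin n)) R
      (exu i x (hxmem i x))
  set G : ∀ (i : Fin k), {x // x ∈ (A i)ᶜ} → {y // y ∈ A (i + 1)} :=
    fun i x => ⟨(g i x).2.1,
      Finset.mem_image.2 ⟨g i x, Finset.mem_filter.2 ⟨hgR i x, (hgp i x).1⟩, rfl⟩⟩ with hG
  have hGbij : ∀ i, Function.Bijective (G i) := by
    intro i
    constructor
    · intro x y hxy
      have h1 : (g i x).2.1 = (g i y).2.1 := congrArg Subtype.val hxy
      have h2' : g i x = g i y :=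
        eq_of_same_row hR (hgR i x) (hgR i y) ((hgp i x).1.trans (hgp i y).1.symm) h1
      apply Subtype.ext
      rw [← (hgp i x).2, ← (hgp i y).2, h2']
    · rintro ⟨y, hy⟩
      obtain ⟨r, hrf, hr2⟩ := Finset.mem_image.1 hy
      rw [Finset.mem_filter] at hrf
      have hxc : r.2.2 ∉ A i := by
        have := hcompl r hrf.1
        rwa [hrf.2, add_sub_cancel_right] at this
      refine ⟨⟨r.2.2, Finset.mem_compl.2 hxc⟩, ?_⟩
      have hgr : g i ⟨r.2.2, Finset.mem_compl.2 hxc⟩ = r := by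
        refine ((exu i r.2.2 hxc).unique ⟨hgR _ _, hgp _ _⟩ ⟨hrf.1, hrf.2, rfl⟩)
      apply Subtype.ext
      simp only [hG]
      rw [hgr, hr2]
  refine ⟨⟨A, fun i => Equiv.ofBijective (G i) (hGbij i)⟩, ?_⟩
  ext r
  constructor
  · intro hr
    obtain ⟨i, x, rfl⟩ := mem_fromD.1 hr
    have : ((Equiv.ofBijective (G i) (hGbij i)) x : Fin n) = (g i x).2.1 := rfl
    have hgx := hgp i x
    have : ((i + 1 : Fin k), ((Equiv.ofBijective (G i) (hGbij i)) x : Fin n), (x : Fin n)) = g i x := by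
      refine Prod.ext hgx.1.symm (Prod.ext rfl hgx.2.symm)
    rw [this]
    exact hgR i x
  · intro hr
    set i := r.1 - 1 with hi
    have hii : i + 1 = r.1 := sub_add_cancel r.1 1
    have hxc : r.2.2 ∉ A i := hcompl r hr
    have hgr : g i ⟨r.2.2, Finset.mem_compl.2 hxc⟩ = r :=
      (exu i r.2.2 hxc).unique ⟨hgR _ _, hgp _ _⟩ ⟨hr, hii.symm, rfl⟩
    apply mem_fromD.2
    refine ⟨i, ⟨r.2.2, Finset.mem_compl.2 hxc⟩, ?_⟩
    refine Prod.ext hii.symm (Prod.ext ?_ rfl)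
    show r.2.1 = ((G i ⟨r.2.2, Finset.mem_compl.2 hxc⟩ : {y // y ∈ A (i+1)}) : Fin n)
    simp only [hG]
    rw [hgr]


open Finset
variable {n k : ℕ}

instance [NeZero k] : Fintype (DT n k) := by
  unfold DT
  infer_instance

def cval (n j m : ℕ) : ℕ := if m % 2 = 0 then j else n - j

lemma card_equiv_ite (α β : Type) [Fintype α] [DecidableEq α] [Fintype β] [DecidableEq β] :
    Fintype.card (α ≃ β) =
      if Fintype.card α = Fintype.card β then (Fintype.card α).factorial else 0 := by
  split_ifs with h
  · rw [Fintype.card_equiv (Fintype.equivOfCardEq h)]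
  · have : IsEmpty (α ≃ β) := ⟨fun e => h (Fintype.card_congr e)⟩
    exact Fintype.card_eq_zero

lemma cval_succ_aux [NeZero k] (hk2 : 2 ∣ k) (h2 : 2 ≤ k) {j : ℕ} (hj : j ≤ n) (i : Fin k) :
    n - cval n j (i : ℕ) = cval n j ((i + 1 : Fin k) : ℕ) := by
  have hik := i.isLt
  rw [val_add_one h2]
  have h1 : ((i : ℕ) + 1) % k = if (i : ℕ) + 1 = k then 0 else (i : ℕ) + 1 := by
    split_ifs with h
    · simp [h]
    · exact Nat.mod_eq_of_lt (by omega)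
  rw [h1]
  unfold cval
  split_ifs <;> omega

lemma pattern_of_rec [NeZero k] (h2 : 2 ≤ k) {c : Fin k → ℕ} (hle : ∀ i, c i ≤ n)
    (hrec : ∀ i, n - c i = c (i + 1)) : ∀ i : Fin k, c i = cval n (c 0) (i : ℕ) := by
  have key : ∀ m (hm : m < k), c ⟨m, hm⟩ = cval n (c 0) m := by
    intro m
    induction m with
    | zero =>
      intro hm
      have h0 : (⟨0, hm⟩ : Fin k) = 0 := rfl
      rw [h0]
      simp [cval]
    | succ m ih =>
      intro hm
      have hmk : m < k := by omega
      have hstep : (⟨m + 1, hm⟩ : Fin k) = ⟨m, hmk⟩ + 1 := by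
        apply Fin.ext
        rw [val_add_one h2]
        simp [Nat.mod_eq_of_lt hm]
      rw [hstep, ← hrec ⟨m, hmk⟩, ih hmk]
      have h0n : c 0 ≤ n := hle 0
      unfold cval
      split_ifs <;> omega
  intro i
  have := key i.1 i.2
  simpa using this

lemma prod_alt {x y : ℕ} (m : ℕ) (f : ℕ → ℕ) (hf : ∀ i, f i = if i % 2 = 0 then x else y) :
    ∏ i ∈ Finset.range (2 * m), f i = (x * y) ^ m := by
  induction m with
  | zero => simp
  | succ m ih =>
    have h2m : 2 * (m + 1) = (2 * m) + 1 + 1 := by ring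
    rw [h2m, Finset.prod_range_succ, Finset.prod_range_succ, ih, hf, hf]
    rw [if_pos (by omega : (2 * m) % 2 = 0), if_neg (by omega : ¬ (2 * m + 1) % 2 = 0)]
    ring

lemma prod_term [NeZero k] (h2 : 2 ≤ k) (hk2 : 2 ∣ k) (A : Fin k → Finset (Fin n)) :
    (∏ i : Fin k, if n - (A i).card = (A (i + 1)).card then (n - (A i).card).factorial else 0)
    = ∑ j ∈ Finset.range (n + 1), if (∀ i : Fin k, (A i).card = cval n j (i : ℕ)) then
        (∏ i : Fin k, (cval n j (i : ℕ)).factorial) else 0 := by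
  classical
  by_cases hA : ∀ i : Fin k, (A i).card = cval n ((A 0).card) (i : ℕ)
  · set j0 := (A 0).card with hj0
    have hj0n : j0 ≤ n := card_le _
    have hcond : ∀ i : Fin k, n - (A i).card = (A (i + 1)).card := by
      intro i
      rw [hA i, hA (i + 1)]
      exact cval_succ_aux hk2 h2 hj0n i
    have hL : (∏ i : Fin k, if n - (A i).card = (A (i + 1)).card
          then (n - (A i).card).factorial else 0)
        = ∏ i : Fin k, (cval n j0 (i : ℕ)).factorial := by
      calc (∏ i : Fin k, if n - (A i).card = (A (i + 1)).card
              then (n - (A i).card).factorial else 0)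
          = ∏ i : Fin k, ((A (i + 1)).card).factorial :=
            Finset.prod_congr rfl fun i _ => by rw [if_pos (hcond i), hcond i]
        _ = ∏ i : Fin k, ((A i).card).factorial :=
            Equiv.prod_comp (Equiv.addRight (1 : Fin k)) (fun i => ((A i).card).factorial)
        _ = ∏ i : Fin k, (cval n j0 (i : ℕ)).factorial :=
            Finset.prod_congr rfl fun i _ => by rw [hA i]
    rw [hL]
    rw [Finset.sum_eq_single_of_mem j0 (Finset.mem_range.2 (by omega))]
    · rw [if_pos hA]
    · intro j hj hne
      apply if_neg
      intro hp
      apply hne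
      have := hp 0
      simpa [cval] using this.symm
  · have hL : (∏ i : Fin k, if n - (A i).card = (A (i + 1)).card
          then (n - (A i).card).factorial else 0) = 0 := by
      by_contra hne
      apply hA
      have hall : ∀ i : Fin k, n - (A i).card = (A (i + 1)).card := by
        intro i
        by_contra hc
        apply hne
        apply Finset.prod_eq_zero (Finset.mem_univ i)
        rw [if_neg hc]
      exact pattern_of_rec h2 (fun i => card_le _) hall
    rw [hL]
    symm
    apply Finset.sum_eq_zero
    intro j hj
    apply if_neg
    intro hp
    apply hA
    have h0 : (A 0).card = j := by
      have := hp 0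
      simpa [cval] using this
    rw [h0]
    exact hp

lemma card_fiber [NeZero k] (j : ℕ) :
    (Finset.univ.filter
        (fun A : Fin k → Finset (Fin n) => ∀ i : Fin k, (A i).card = cval n j (i : ℕ))).card
    = ∏ i : Fin k, n.choose (cval n j (i : ℕ)) := by
  classical
  have hset : (Finset.univ.filter
        (fun A : Fin k → Finset (Fin n) => ∀ i : Fin k, (A i).card = cval n j (i : ℕ)))
      = Fintype.piFinset (fun i : Fin k => Finset.univ.powersetCard (cval n j (i : ℕ))) := by
    ext A
    simp [Fintype.mem_piFinset, Finset.mem_powersetCard, Finset.subset_univ]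
  rw [hset, Fintype.card_piFinset]
  apply Finset.prod_congr rfl
  intro i _
  rw [Finset.card_powersetCard, Finset.card_univ, Fintype.card_fin]

lemma final_arith (hk2 : 2 ∣ k) {j : ℕ} (hj : j ≤ n) :
    (∏ i : Fin k, n.choose (cval n j (i : ℕ))) * (∏ i : Fin k, (cval n j (i : ℕ)).factorial)
      = n.factorial ^ (k / 2) * (n.choose j) ^ (k / 2) := by
  obtain ⟨m, rfl⟩ := hk2
  have hm2 : 2 * m / 2 = m := by omega
  rw [hm2]
  have hc : ∏ i : Fin (2 * m), n.choose (cval n j (i : ℕ))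
      = (n.choose j * n.choose (n - j)) ^ m := by
    rw [Fin.prod_univ_eq_prod_range (fun i => n.choose (cval n j i)) (2 * m)]
    exact prod_alt m (fun i => n.choose (cval n j i))
      (fun i => by unfold cval; split_ifs with h <;> simp [h])
  have hf : ∏ i : Fin (2 * m), (cval n j (i : ℕ)).factorial
      = (j.factorial * (n - j).factorial) ^ m := by
    rw [Fin.prod_univ_eq_prod_range (fun i => (cval n j i).factorial) (2 * m)]
    exact prod_alt m (fun i => (cval n j i).factorial)
      (fun i => by unfold cval; split_ifs with h <;> simp [h])
  rw [hc, hf, ← mul_pow, ← mul_pow]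
  congr 1
  rw [Nat.choose_symm hj]
  calc n.choose j * n.choose j * (j.factorial * (n - j).factorial)
      = n.choose j * (n.choose j * j.factorial * (n - j).factorial) := by ring
    _ = n.choose j * n.factorial := by rw [Nat.choose_mul_factorial_mul_factorial hj]
    _ = n.factorial * n.choose j := by ring


lemma card_DT_eq [NeZero k] (h2 : 2 ≤ k) (hk2 : 2 ∣ k) :
    Fintype.card (DT n k)
      = n.factorial ^ (k / 2) * ∑ j ∈ Finset.range (n + 1), (n.choose j) ^ (k / 2) := by
  have e : DT n k ≃ Σ A : Fin k → Finset (Fin n),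
      ∀ i : Fin k, (↥((A i)ᶜ)) ≃ (↥(A (i + 1))) := Equiv.refl _
  rw [Fintype.card_congr e, Fintype.card_sigma]
  have hterm : ∀ A : Fin k → Finset (Fin n),
      Fintype.card (∀ i : Fin k, (↥((A i)ᶜ)) ≃ (↥(A (i + 1))))
      = ∏ i : Fin k,
          (if n - (A i).card = (A (i + 1)).card then (n - (A i).card).factorial else 0) := by
    intro A
    rw [Fintype.card_pi]
    apply Finset.prod_congr rfl
    intro i _
    rw [card_equiv_ite]
    have h1 : Fintype.card (↥((A i)ᶜ)) = n - (A i).card := by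
      rw [Fintype.card_coe, Finset.card_compl, Fintype.card_fin]
    have h2' : Fintype.card (↥(A (i + 1))) = (A (i + 1)).card := Fintype.card_coe _
    rw [h1, h2']
  rw [Finset.sum_congr rfl (fun A _ => hterm A)]
  rw [Finset.sum_congr rfl (fun A _ => prod_term h2 hk2 A)]
  rw [Finset.sum_comm]
  have hj : ∀ j ∈ Finset.range (n + 1),
      (∑ A : Fin k → Finset (Fin n),
        if (∀ i : Fin k, (A i).card = cval n j (i : ℕ)) then
          (∏ i : Fin k, (cval n j (i : ℕ)).factorial) else 0)
      = n.factorial ^ (k / 2) * (n.choose j) ^ (k / 2) := by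
    intro j hjr
    rw [← Finset.sum_filter, Finset.sum_const, smul_eq_mul, card_fiber]
    exact final_arith hk2 (by have := Finset.mem_range.1 hjr; omega : j ≤ n)
  rw [Finset.sum_congr rfl hj, ← Finset.mul_sum]


end CMCaux

/-- For `k` even, the number of maximum rook placements on the circular chained board
is `(n!)^(k/2) · Σ_j C(n,j)^(k/2)`. -/
theorem circular_max_count_k_even (n k : ℕ) (hk : 0 < k) (hk2 : 2 ∣ k) :
    Nat.card {R : Finset (Fin k × Fin n × Fin n) //
        CircNonAtt n k R ∧ R.card = n * k / 2} =
      Nat.factorial n ^ (k / 2) * ∑ j ∈ Finset.range (n + 1), (Nat.choose n j) ^ (k / 2) := by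
  haveI : NeZero k := ⟨hk.ne'⟩
  have h2 : 2 ≤ k := by
    obtain ⟨m, rfl⟩ := hk2
    omega
  set F : CMCaux.DT n k → {R : Finset (Fin k × Fin n × Fin n) //
      CircNonAtt n k R ∧ R.card = n * k / 2} :=
    fun d => ⟨CMCaux.fromD d, CMCaux.fromD_nonatt h2 d, CMCaux.card_fromD d⟩ with hF
  have hbij : Function.Bijective F := by
    constructor
    · intro d d' h
      exact CMCaux.fromD_injective (congrArg Subtype.val h)
    · rintro ⟨R, hR, hc⟩
      have h2c : 2 * R.card = n * k := by
        rw [hc]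
        exact Nat.mul_div_cancel' (hk2.mul_left n)
      obtain ⟨d, hd⟩ := CMCaux.fromD_surj h2 hR h2c
      exact ⟨d, Subtype.ext hd⟩
  calc Nat.card {R : Finset (Fin k × Fin n × Fin n) //
        CircNonAtt n k R ∧ R.card = n * k / 2}
      = Nat.card (CMCaux.DT n k) := (Nat.card_congr (Equiv.ofBijective F hbij)).symm
    _ = Fintype.card (CMCaux.DT n k) := Nat.card_eq_fintype_card
    _ = Nat.factorial n ^ (k / 2) * ∑ j ∈ Finset.range (n + 1), (Nat.choose n j) ^ (k / 2) :=
      CMCaux.card_DT_eq h2 hk2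
end

section
/- For k odd and n even, the number of maximum non-attacking rook placements on the circular chained board B^∘_{n,k} equals ((n)_{n/2})^k, where (n)_m is the falling factorial n(n-1)···(n-m+1). -/
theorem Function.Periodic.two_mul_eq_of_add_add_one_eq {c : ℕ → ℕ} {k n : ℕ}
    (hc : Function.Periodic c k) (hk : Odd k) (hsum : ∀ t, c t + c (t + 1) = n) (t : ℕ) :
    2 * c t = n := by
  obtain ⟨j, rfl⟩ := hk
  have hc₂ : Function.Periodic c 2 := fun t => by
    have := hsum t
    have := hsum (t + 1)
    show c (t + 1 + 1) = c t
    omega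
  have hstep : c (t + 1) = c t :=
    calc c (t + 1) = c (t + 1 + j * 2) := (hc₂.nat_mul j (t + 1)).symm
      _ = c (t + (2 * j + 1)) := by ring_nf
      _ = c t := hc t
  have := hsum t
  omega

namespace ChainedBoard

variable {n k m : ℕ} {R : Finset (Fin k × Fin n × Fin n)}

def rowsOf (R : Finset (Fin k × Fin n × Fin n)) (i : Fin k) : Finset (Fin n) :=
  {r ∈ R | r.1 = i}.image fun r => r.2.1

def colsOf (R : Finset (Fin k × Fin n × Fin n)) (i : Fin k) : Finset (Fin n) :=
  {r ∈ R | r.1 = i}.image fun r => r.2.2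

theorem card_rowsOf (h : CircNonAtt n k R) (i : Fin k) : (rowsOf R i).card = bCount R i := by
  refine Finset.card_image_of_injOn fun r hr s hs hrs => ?_
  simp only [Finset.coe_filter, Set.mem_ofPred_eq] at hr hs
  by_contra hne
  exact (h.1 r hr.1 s hs.1 hne (hr.2.trans hs.2.symm)).1 hrs

theorem card_colsOf (h : CircNonAtt n k R) (i : Fin k) : (colsOf R i).card = bCount R i := by
  refine Finset.card_image_of_injOn fun r hr s hs hrs => ?_
  simp only [Finset.coe_filter, Set.mem_ofPred_eq] at hr hs
  by_contra hne
  exact (h.1 r hr.1 s hs.1 hne (hr.2.trans hs.2.symm)).2 hrs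

theorem sum_bCount (R : Finset (Fin k × Fin n × Fin n)) : ∑ i, bCount R i = R.card :=
  (Finset.card_eq_sum_card_fiberwise fun _ _ => Finset.mem_univ _).symm

theorem exists_row_embedding (h : CircNonAtt n k R) (hcols : ∀ i, (colsOf R i).card = m) :
    ∃ ψ : Fin k → (Fin m ↪ Fin n),
      ∀ i j, (i, ψ i j, (colsOf R i).orderEmbOfFin (hcols i) j) ∈ R := by
  have hrook (i : Fin k) (j : Fin m) : ∃ a, (i, a, (colsOf R i).orderEmbOfFin (hcols i) j) ∈ R := by
    obtain ⟨⟨i', a, c⟩, hmem, hc⟩ :=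
      Finset.mem_image.1 (Finset.orderEmbOfFin_mem _ (hcols i) j)
    rw [Finset.mem_filter] at hmem
    obtain ⟨hmem, rfl⟩ := hmem
    exact ⟨a, hc ▸ hmem⟩
  choose row hrow using hrook
  refine ⟨fun i => ⟨row i, fun j j' hjj' => ?_⟩, hrow⟩
  by_contra hne
  refine (h.1 _ (hrow i j) _ (hrow i j') ?_ rfl).1 hjj'
  simp [hne]

variable [NeZero k]

theorem disjoint_rowsOf_colsOf_add_one (h : CircNonAtt n k R) (i : Fin k) :
    Disjoint (rowsOf R i) (colsOf R (i + 1)) := by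
  simp only [rowsOf, colsOf, Finset.disjoint_left, Finset.mem_image, Finset.mem_filter]
  rintro _ ⟨r, ⟨hr, rfl⟩, rfl⟩ ⟨s, ⟨hs, hsi⟩, hrs⟩
  refine h.2 r hr s hs ?_ hrs.symm
  rw [hsi, Fin.val_add, Fin.val_one', Nat.add_mod_mod]

theorem bCount_add_bCount_add_one_le (h : CircNonAtt n k R) (i : Fin k) :
    bCount R i + bCount R (i + 1) ≤ n := by
  rw [← card_rowsOf h, ← card_colsOf h,
    ← Finset.card_union_of_disjoint (disjoint_rowsOf_colsOf_add_one h i)]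
  exact (Finset.card_le_univ _).trans_eq (Fintype.card_fin n)

theorem sum_bCount_add_bCount_add_one (R : Finset (Fin k × Fin n × Fin n)) :
    ∑ i, (bCount R i + bCount R (i + 1)) = 2 * R.card := by
  rw [Finset.sum_add_distrib,
    Fintype.sum_equiv (Equiv.addRight 1) (fun i => bCount R (i + 1)) _ fun _ => rfl, sum_bCount]
  ring

theorem bCount_add_bCount_add_one_eq (h : CircNonAtt n k R) (hR : 2 * R.card = n * k)
    (i : Fin k) : bCount R i + bCount R (i + 1) = n := by
  have hsum : ∑ i, (bCount R i + bCount R (i + 1)) = ∑ _i : Fin k, n := by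
    simp [sum_bCount_add_bCount_add_one, hR, mul_comm]
  exact (Finset.sum_eq_sum_iff_of_le fun i _ => bCount_add_bCount_add_one_le h i).1 hsum i
    (Finset.mem_univ i)

open Fin.NatCast in
theorem two_mul_bCount (h : CircNonAtt n k R) (hk : Odd k) (hR : 2 * R.card = n * k)
    (i : Fin k) : 2 * bCount R i = n := by
  have hc : Function.Periodic (fun t : ℕ => bCount R t) k := fun t => by simp
  simpa using hc.two_mul_eq_of_add_add_one_eq hk
    (fun t => by simpa using bCount_add_bCount_add_one_eq h hR t) i

theorem colsOf_add_one (h : CircNonAtt n k R) (hk : Odd k) (hR : 2 * R.card = n * k)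
    (i : Fin k) : colsOf R (i + 1) = (rowsOf R i)ᶜ := by
  refine Finset.eq_of_subset_of_card_le
    (fun x hx => Finset.mem_compl.2 fun hx' =>
      Finset.disjoint_left.1 (disjoint_rowsOf_colsOf_add_one h i) hx' hx) ?_
  rw [Finset.card_compl, Fintype.card_fin, card_rowsOf h, card_colsOf h]
  have := two_mul_bCount h hk hR i
  have := two_mul_bCount h hk hR (i + 1)
  omega

theorem card_compl_map_univ (e : Fin m ↪ Fin (2 * m)) : (Finset.univ.map e)ᶜ.card = m := by
  simp only [Finset.card_compl, Finset.card_map, Finset.card_univ, Fintype.card_fin]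
  omega

def freeCol (ψ : Fin k → (Fin m ↪ Fin (2 * m))) (i : Fin k) : Fin m ↪o Fin (2 * m) :=
  (Finset.univ.map (ψ (i - 1)))ᶜ.orderEmbOfFin (card_compl_map_univ _)

theorem freeCol_mem (ψ : Fin k → (Fin m ↪ Fin (2 * m))) (i : Fin k) (j : Fin m) :
    freeCol ψ i j ∈ (Finset.univ.map (ψ (i - 1)))ᶜ :=
  Finset.orderEmbOfFin_mem _ _ j

/-- Rook `j` of board `i` sits in row `ψ i j` and in the `j`-th smallest of the columns left
free by the rows of board `i - 1`. -/
def placement (ψ : Fin k → (Fin m ↪ Fin (2 * m))) : Finset (Fin k × Fin (2 * m) × Fin (2 * m)) :=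
  Finset.univ.image fun p : Fin k × Fin m => (p.1, ψ p.1 p.2, freeCol ψ p.1 p.2)

theorem mem_placement {ψ : Fin k → (Fin m ↪ Fin (2 * m))} {x : Fin k × Fin (2 * m) × Fin (2 * m)} :
    x ∈ placement ψ ↔ ∃ j, ψ x.1 j = x.2.1 ∧ freeCol ψ x.1 j = x.2.2 := by
  simp only [placement, Finset.mem_image, Finset.mem_univ, true_and, Prod.exists]
  constructor
  · rintro ⟨i, j, rfl⟩
    exact ⟨j, rfl, rfl⟩
  · rintro ⟨j, hrow, hcol⟩
    exact ⟨x.1, j, by rw [hrow, hcol]⟩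

theorem card_placement (ψ : Fin k → (Fin m ↪ Fin (2 * m))) : (placement ψ).card = m * k := by
  rw [placement, Finset.card_image_of_injective, Finset.card_univ, Fintype.card_prod,
    Fintype.card_fin, Fintype.card_fin, mul_comm]
  rintro ⟨i, j⟩ ⟨i', j'⟩ hij
  simp only [Prod.mk.injEq] at hij
  obtain ⟨rfl, hrow, -⟩ := hij
  rw [(ψ i).injective hrow]

theorem circNonAtt_placement (ψ : Fin k → (Fin m ↪ Fin (2 * m))) :
    CircNonAtt (2 * m) k (placement ψ) := by
  constructor
  · rintro r hr s hs hrs hboard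
    obtain ⟨j, hrow, hcol⟩ := mem_placement.1 hr
    obtain ⟨j', hrow', hcol'⟩ := mem_placement.1 hs
    rw [← hboard] at hrow' hcol'
    have hjj' : j ≠ j' := by
      rintro rfl
      exact hrs (Prod.ext hboard (Prod.ext (hrow.symm.trans hrow') (hcol.symm.trans hcol')))
    rw [← hrow, ← hrow', ← hcol, ← hcol']
    exact ⟨(ψ r.1).injective.ne hjj', (freeCol ψ r.1).injective.ne hjj'⟩
  · rintro r hr s hs hnext
    obtain ⟨j, hrow, -⟩ := mem_placement.1 hr
    obtain ⟨j', -, hcol'⟩ := mem_placement.1 hs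
    have hboard : s.1 - 1 = r.1 := by
      rw [sub_eq_iff_eq_add]
      ext
      rw [← hnext, Fin.val_add, Fin.val_one', Nat.add_mod_mod]
    have hfree := freeCol_mem ψ s.1 j'
    rw [hboard, Finset.mem_compl, Finset.mem_map] at hfree
    rw [← hrow, ← hcol']
    exact fun h => hfree ⟨j, Finset.mem_univ _, h⟩

theorem rowsOf_placement (ψ : Fin k → (Fin m ↪ Fin (2 * m))) (i : Fin k) :
    rowsOf (placement ψ) i = Finset.univ.map (ψ i) := by
  ext x
  simp only [rowsOf, Finset.mem_image, Finset.mem_filter, Finset.mem_map, Finset.mem_univ,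
    true_and]
  constructor
  · rintro ⟨r, ⟨hr, rfl⟩, rfl⟩
    obtain ⟨j, hrow, -⟩ := mem_placement.1 hr
    exact ⟨j, hrow⟩
  · rintro ⟨j, rfl⟩
    exact ⟨(i, ψ i j, freeCol ψ i j), ⟨mem_placement.2 ⟨j, rfl, rfl⟩, rfl⟩, rfl⟩

theorem placement_injective :
    Function.Injective (placement : (Fin k → (Fin m ↪ Fin (2 * m))) → _) := by
  intro ψ ψ' hψ
  have hrows (i : Fin k) : Finset.univ.map (ψ i) = Finset.univ.map (ψ' i) := by
    rw [← rowsOf_placement, hψ, rowsOf_placement]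
  have hfree (i : Fin k) : freeCol ψ i = freeCol ψ' i :=
    Finset.orderEmbOfFin_unique' _ fun j => hrows (i - 1) ▸ freeCol_mem ψ i j
  funext i
  ext j
  have hmem : (i, ψ i j, freeCol ψ i j) ∈ placement ψ' := hψ ▸ mem_placement.2 ⟨j, rfl, rfl⟩
  obtain ⟨j', hrow, hcol⟩ := mem_placement.1 hmem
  obtain rfl : j' = j := (freeCol ψ' i).injective (hcol.trans (by rw [hfree]))
  exact congrArg Fin.val hrow.symm

theorem exists_placement_eq {R : Finset (Fin k × Fin (2 * m) × Fin (2 * m))}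
    (h : CircNonAtt (2 * m) k R) (hk : Odd k) (hR : R.card = m * k) :
    ∃ ψ, placement ψ = R := by
  have hR' : 2 * R.card = 2 * m * k := by rw [hR, mul_assoc]
  have hcount (i : Fin k) : bCount R i = m := by
    have := two_mul_bCount h hk hR' i
    omega
  have hcols (i : Fin k) : (colsOf R i).card = m := (card_colsOf h i).trans (hcount i)
  obtain ⟨ψ, hψ⟩ := exists_row_embedding h hcols
  have hrows (i : Fin k) : Finset.univ.map (ψ i) = rowsOf R i := by
    refine Finset.eq_of_subset_of_card_le (fun x hx => ?_) ?_
    · obtain ⟨j, -, rfl⟩ := Finset.mem_map.1 hx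
      exact Finset.mem_image.2 ⟨_, Finset.mem_filter.2 ⟨hψ i j, rfl⟩, rfl⟩
    · rw [card_rowsOf h, hcount, Finset.card_map, Finset.card_univ, Fintype.card_fin]
  have hfree (i : Fin k) : freeCol ψ i = (colsOf R i).orderEmbOfFin (hcols i) := by
    refine Finset.orderEmbOfFin_unique' _ fun j => ?_
    rw [← sub_add_cancel i 1, colsOf_add_one h hk hR', ← hrows, sub_add_cancel]
    exact freeCol_mem ψ i j
  refine ⟨ψ, Finset.eq_of_subset_of_card_le (fun x hx => ?_) (by rw [hR, card_placement])⟩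
  obtain ⟨j, hrow, hcol⟩ := mem_placement.1 hx
  rw [hfree] at hcol
  simpa only [hrow, hcol] using hψ x.1 j

end ChainedBoard

open ChainedBoard in
/-- For `k` odd and `n` even, the number of maximum rook placements on the circular
chained board is `((n)_(n/2))^k`. -/
theorem circular_max_count_k_odd_n_even (n k : ℕ) (hko : Odd k) (hne : Even n) :
    Nat.card {R : Finset (Fin k × Fin n × Fin n) //
        CircNonAtt n k R ∧ R.card = n * k / 2} =
      (Nat.descFactorial n (n / 2)) ^ k := by
  obtain ⟨m, rfl⟩ := hne.two_dvd
  have : NeZero k := ⟨hko.pos.ne'⟩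
  rw [mul_assoc, Nat.mul_div_cancel_left _ two_pos, Nat.mul_div_cancel_left _ two_pos]
  let toMax (ψ : Fin k → (Fin m ↪ Fin (2 * m))) :
      {R // CircNonAtt (2 * m) k R ∧ R.card = m * k} :=
    ⟨placement ψ, circNonAtt_placement ψ, card_placement ψ⟩
  have htoMax : Function.Bijective toMax :=
    ⟨fun _ _ h => placement_injective (congrArg Subtype.val h),
      fun ⟨_, h, hR⟩ => (exists_placement_eq h hko hR).imp fun _ => Subtype.ext⟩
  rw [← Nat.card_eq_of_bijective toMax htoMax]
  simp only [Nat.card_eq_fintype_card, Fintype.card_pi, Fintype.card_embedding_eq,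
    Fintype.card_fin, Finset.prod_const, Finset.card_univ]
end

section
/- The set of chained circular permutation matrices P^∘_{n,4} is in bijection with the set of 2n×2n permutation matrices; hence |P^∘_{n,4}| = (2n)!. -/
/-- `M` is an `n×n` permutation matrix. -/
def IsPermMatrix (n : ℕ) (M : Matrix (Fin n) (Fin n) ℕ) : Prop :=
  ∃ σ : Equiv.Perm (Fin n), ∀ i j, M i j = if σ i = j then 1 else 0


/-- Chained circular permutation matrices for `k = 4`: a 4-tuple of `n×n` `{0,1}`
matrices such that for each `ℓ` and `i`, the `i`-th row sum of `X^(ℓ-1)` plus the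
`i`-th column sum of `X^(ℓ)` is in `{0,1}`, and the total sum of entries is the
maximum `⌊4n/2⌋ = 2n`. -/
def IsChainedCircPerm4 (n : ℕ) (X : Fin 4 → Matrix (Fin n) (Fin n) ℕ) : Prop :=
  (∀ ℓ i j, X ℓ i j ≤ 1) ∧
  (∀ ℓ : Fin 4, ∀ i : Fin n, (∑ j, X (ℓ - 1) i j) + (∑ j, X ℓ j i) ≤ 1) ∧
  (∑ ℓ : Fin 4, ∑ i, ∑ j, X ℓ i j) = 2 * n

section Aux

open Finset

/-- Generic permutation-matrix predicate over any index type. -/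
def IsPM {ι : Type*} [DecidableEq ι] [Fintype ι] (M : Matrix ι ι ℕ) : Prop :=
  ∃ σ : Equiv.Perm ι, ∀ i j, M i j = if σ i = j then 1 else 0

lemma sum_all_one {α : Type*} (s : Finset α) (f : α → ℕ)
    (h1 : ∀ a ∈ s, f a ≤ 1) (h2 : ∑ a ∈ s, f a = s.card) :
    ∀ a ∈ s, f a = 1 := by
  by_contra hc
  push_neg at hc
  obtain ⟨a, ha, hne⟩ := hc
  have hlt : f a < 1 := lt_of_le_of_ne (h1 a ha) hne
  have h3 : ∑ a ∈ s, f a < ∑ _a ∈ s, 1 := Finset.sum_lt_sum h1 ⟨a, ha, hlt⟩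
  rw [h2, Finset.sum_const, smul_eq_mul, mul_one] at h3
  exact lt_irrefl _ h3

lemma key_sum (n : ℕ) (X : Fin 4 → Matrix (Fin n) (Fin n) ℕ) :
    ∑ ℓ : Fin 4, ∑ i : Fin n, ((∑ j, X (ℓ - 1) i j) + (∑ j, X ℓ j i))
      = 2 * ∑ ℓ : Fin 4, ∑ i, ∑ j, X ℓ i j := by
  rw [two_mul]
  simp only [Finset.sum_add_distrib]
  congr 1
  · exact Fintype.sum_equiv (Equiv.subRight (1 : Fin 4))
      (fun ℓ => ∑ i, ∑ j, X (ℓ - 1) i j) (fun ℓ => ∑ i, ∑ j, X ℓ i j) (fun ℓ => rfl)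
  · exact Finset.sum_congr rfl (fun ℓ _ => Finset.sum_comm)

lemma chained_iff (n : ℕ) (X : Fin 4 → Matrix (Fin n) (Fin n) ℕ) :
    IsChainedCircPerm4 n X ↔
      ∀ (ℓ : Fin 4) (i : Fin n), (∑ j, X (ℓ - 1) i j) + (∑ j, X ℓ j i) = 1 := by
  constructor
  · rintro ⟨-, hc, ht⟩ ℓ i
    refine sum_all_one (Finset.univ : Finset (Fin 4 × Fin n))
      (fun p => (∑ j, X (p.1 - 1) p.2 j) + (∑ j, X p.1 j p.2))
      (fun p _ => hc p.1 p.2) ?_ (ℓ, i) (Finset.mem_univ _)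
    rw [Fintype.sum_prod_type, key_sum, ht, Finset.card_univ]
    simp only [Fintype.card_prod, Fintype.card_fin]
    ring
  · intro hs
    have hrow : ∀ (ℓ : Fin 4) (i : Fin n), (∑ j, X ℓ i j) ≤ 1 := by
      intro ℓ i
      have h := hs (ℓ + 1) i
      have hℓ : (ℓ + 1 - 1 : Fin 4) = ℓ := by simp
      rw [hℓ] at h
      omega
    refine ⟨fun ℓ i j => ?_, fun ℓ i => le_of_eq (hs ℓ i), ?_⟩
    · exact le_trans (Finset.single_le_sum (fun j _ => Nat.zero_le _) (Finset.mem_univ j))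
        (hrow ℓ i)
    · have h := key_sum n X
      have h2 : ∑ ℓ : Fin 4, ∑ i : Fin n,
          ((∑ j, X (ℓ - 1) i j) + (∑ j, X ℓ j i)) = 4 * n := by
        calc ∑ ℓ : Fin 4, ∑ i : Fin n, ((∑ j, X (ℓ - 1) i j) + (∑ j, X ℓ j i))
            = ∑ _ℓ : Fin 4, ∑ _i : Fin n, 1 := by
              exact Finset.sum_congr rfl fun ℓ _ =>
                Finset.sum_congr rfl fun i _ => hs ℓ i
          _ = 4 * n := by simp [mul_comm]
      omega

lemma isPM_iff {ι : Type*} [DecidableEq ι] [Fintype ι] (M : Matrix ι ι ℕ) :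
    IsPM M ↔ (∀ i, ∑ j, M i j = 1) ∧ (∀ j, ∑ i, M i j = 1) := by
  constructor
  · rintro ⟨σ, h⟩
    constructor
    · intro i; simp [h]
    · intro j
      simp only [h]
      rw [Equiv.sum_comp σ (fun x => if x = j then (1:ℕ) else 0)]
      simp
  · rintro ⟨hr, hcol⟩
    have hx : ∀ i, ∃ j, M i j = 1 := by
      intro i
      by_contra h
      push_neg at h
      have h0 : ∀ j, M i j = 0 := by
        intro j
        have h1 : M i j ≤ 1 := (hr i) ▸
          Finset.single_le_sum (f := M i) (fun j _ => Nat.zero_le _) (Finset.mem_univ j)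
        have := h j
        omega
      have := hr i
      rw [Finset.sum_eq_zero (fun j _ => h0 j)] at this
      omega
    choose f hf using hx
    have hzero : ∀ i j, j ≠ f i → M i j = 0 := by
      intro i j hj
      have hsplit : M i (f i) + ∑ q ∈ Finset.univ.erase (f i), M i q = 1 := by
        rw [Finset.add_sum_erase _ _ (Finset.mem_univ (f i))]
        exact hr i
      have hmem : j ∈ Finset.univ.erase (f i) := Finset.mem_erase.mpr ⟨hj, Finset.mem_univ j⟩
      have hle : M i j ≤ ∑ q ∈ Finset.univ.erase (f i), M i q :=
        Finset.single_le_sum (fun q _ => Nat.zero_le _) hmem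
      have := hf i
      omega
    have hinj : Function.Injective f := by
      intro i i' h
      by_contra hne
      have hsplit : M i (f i) + ∑ r ∈ Finset.univ.erase i, M r (f i) = 1 := by
        rw [Finset.add_sum_erase _ (fun r => M r (f i)) (Finset.mem_univ i)]
        exact hcol (f i)
      have hmem : i' ∈ Finset.univ.erase i := Finset.mem_erase.mpr ⟨Ne.symm hne, Finset.mem_univ i'⟩
      have hle : M i' (f i) ≤ ∑ r ∈ Finset.univ.erase i, M r (f i) :=
        Finset.single_le_sum (f := fun r => M r (f i)) (fun r _ => Nat.zero_le _) hmem
      have h1 := hf i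
      have h2 := hf i'
      rw [← h] at h2
      omega
    refine ⟨Equiv.ofBijective f ((Finite.injective_iff_bijective).mp hinj), fun i j => ?_⟩
    have hσ : (Equiv.ofBijective f ((Finite.injective_iff_bijective).mp hinj)) i = f i := rfl
    rw [hσ]
    by_cases h : f i = j
    · subst h; simp [hf i]
    · rw [if_neg h]
      exact hzero i j (fun e => h e.symm)

/-- Permutations are in bijection with permutation matrices. -/
noncomputable def pmEquiv (ι : Type*) [DecidableEq ι] [Fintype ι] :
    Equiv.Perm ι ≃ {M : Matrix ι ι ℕ // IsPM M} :=
  Equiv.ofBijective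
    (fun σ => ⟨fun i j => if σ i = j then 1 else 0, σ, fun _ _ => rfl⟩)
    ⟨by
      intro σ τ h
      have h' := congrArg Subtype.val h
      ext i
      have hthis : (if σ i = σ i then (1:ℕ) else 0) = (if τ i = σ i then (1:ℕ) else 0) :=
        congrFun (congrFun h' i) (σ i)
      by_contra hne
      have hτ : ¬ (τ i = σ i) := fun e => hne e.symm
      rw [if_pos rfl, if_neg hτ] at hthis
      exact one_ne_zero hthis,
     by
      rintro ⟨M, σ, hM⟩
      exact ⟨σ, Subtype.ext (by funext i j; exact (hM i j).symm)⟩⟩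

/-- Assemble four `n×n` matrices into a `2n×2n` block matrix. -/
def assemble (n : ℕ) (X : Fin 4 → Matrix (Fin n) (Fin n) ℕ) :
    Matrix (Fin n ⊕ Fin n) (Fin n ⊕ Fin n) ℕ :=
  fun p q =>
    match p, q with
    | Sum.inl i, Sum.inl j => X 0 i j
    | Sum.inl i, Sum.inr j => X 1 j i
    | Sum.inr i, Sum.inr j => X 2 i j
    | Sum.inr i, Sum.inl j => X 3 j i

def disassemble (n : ℕ) (M : Matrix (Fin n ⊕ Fin n) (Fin n ⊕ Fin n) ℕ) :
    Fin 4 → Matrix (Fin n) (Fin n) ℕ :=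
  fun ℓ i j =>
    if ℓ = 0 then M (Sum.inl i) (Sum.inl j)
    else if ℓ = 1 then M (Sum.inl j) (Sum.inr i)
    else if ℓ = 2 then M (Sum.inr i) (Sum.inr j)
    else M (Sum.inr j) (Sum.inl i)

lemma assemble_isPM (n : ℕ) (X : Fin 4 → Matrix (Fin n) (Fin n) ℕ)
    (hX : IsChainedCircPerm4 n X) : IsPM (assemble n X) := by
  rw [chained_iff] at hX
  rw [isPM_iff]
  constructor
  · rintro (i | i)
    · rw [Fintype.sum_sum_type]
      have h := hX 1 i
      have e : (1 - 1 : Fin 4) = 0 := rfl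
      rw [e] at h
      exact h
    · rw [Fintype.sum_sum_type]
      have h := hX 3 i
      have e : (3 - 1 : Fin 4) = 2 := rfl
      rw [e, Nat.add_comm] at h
      exact h
  · rintro (j | j)
    · rw [Fintype.sum_sum_type]
      have h := hX 0 j
      have e : (0 - 1 : Fin 4) = 3 := rfl
      rw [e] at h
      rw [Nat.add_comm] at h
      exact h
    · rw [Fintype.sum_sum_type]
      have h := hX 2 j
      have e : (2 - 1 : Fin 4) = 1 := rfl
      rw [e] at h
      exact h

lemma disassemble_chained (n : ℕ) (M : Matrix (Fin n ⊕ Fin n) (Fin n ⊕ Fin n) ℕ)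
    (hM : IsPM M) : IsChainedCircPerm4 n (disassemble n M) := by
  rw [isPM_iff] at hM
  obtain ⟨hr, hc⟩ := hM
  rw [chained_iff]
  intro ℓ i
  fin_cases ℓ
  · have h := hc (Sum.inl i)
    rw [Fintype.sum_sum_type, Nat.add_comm] at h
    show (∑ j, M (Sum.inr j) (Sum.inl i)) + (∑ j, M (Sum.inl j) (Sum.inl i)) = 1
    exact h
  · have h := hr (Sum.inl i)
    rw [Fintype.sum_sum_type] at h
    show (∑ j, M (Sum.inl i) (Sum.inl j)) + (∑ j, M (Sum.inl i) (Sum.inr j)) = 1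
    exact h
  · have h := hc (Sum.inr i)
    rw [Fintype.sum_sum_type] at h
    show (∑ j, M (Sum.inl j) (Sum.inr i)) + (∑ j, M (Sum.inr j) (Sum.inr i)) = 1
    exact h
  · have h := hr (Sum.inr i)
    rw [Fintype.sum_sum_type, Nat.add_comm] at h
    show (∑ j, M (Sum.inr i) (Sum.inr j)) + (∑ j, M (Sum.inr i) (Sum.inl j)) = 1
    exact h

/-- The main block-assembly equivalence. -/
def assembleEquiv (n : ℕ) :
    {X : Fin 4 → Matrix (Fin n) (Fin n) ℕ // IsChainedCircPerm4 n X} ≃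
      {M : Matrix (Fin n ⊕ Fin n) (Fin n ⊕ Fin n) ℕ // IsPM M} where
  toFun X := ⟨assemble n X.1, assemble_isPM n X.1 X.2⟩
  invFun M := ⟨disassemble n M.1, disassemble_chained n M.1 M.2⟩
  left_inv := by
    rintro ⟨X, hX⟩
    apply Subtype.ext
    funext ℓ i j
    fin_cases ℓ <;> rfl
  right_inv := by
    rintro ⟨M, hM⟩
    apply Subtype.ext
    funext p q
    rcases p with i | i <;> rcases q with j | j <;> rfl

/-- `P°_{n,4}` is in bijection with `2n×2n` permutation matrices; hence it has
cardinality `(2n)!`. -/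
theorem chained_circ_perm_k4 (n : ℕ) :
    Nonempty ({X : Fin 4 → Matrix (Fin n) (Fin n) ℕ // IsChainedCircPerm4 n X} ≃
        {M : Matrix (Fin (2 * n)) (Fin (2 * n)) ℕ // IsPermMatrix (2 * n) M}) ∧
    Nat.card {X : Fin 4 → Matrix (Fin n) (Fin n) ℕ // IsChainedCircPerm4 n X} =
      Nat.factorial (2 * n) := by
  have e1 : {X : Fin 4 → Matrix (Fin n) (Fin n) ℕ // IsChainedCircPerm4 n X} ≃
      Equiv.Perm (Fin (2 * n)) :=
    ((assembleEquiv n).trans (pmEquiv (Fin n ⊕ Fin n)).symm).trans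
      (Equiv.permCongr (finSumFinEquiv.trans (finCongr (two_mul n).symm)))
  have e2 : Equiv.Perm (Fin (2 * n)) ≃
      {M : Matrix (Fin (2 * n)) (Fin (2 * n)) ℕ // IsPermMatrix (2 * n) M} :=
    (pmEquiv (Fin (2 * n))).trans (Equiv.subtypeEquivRight (fun _ => Iff.rfl))
  refine ⟨⟨e1.trans e2⟩, ?_⟩
  rw [Nat.card_congr e1, Nat.card_eq_fintype_card, Fintype.card_perm, Fintype.card_fin]

end Aux
end
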